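/- arXiv:2206.05235 — 8 statements merged into one kernel-verified Lean document; each statement's English description precedes it below -/
import Mathlib

section
/- Under the stated orthogonality, projection and regularity hypotheses, the quadratic moment function g admits the U-statistic first-step influence function φ(w_i,w_j) = α₀(x_i,x_j)(c₁y_i + c₂y_j − c₁γ₀(x_i) − c₂γ₀(x_j)): namely, (a) the right derivative at τ = 0 of τ ↦ E_{F₀⊗F₀}[g(W_i,W_j,γ_τ,θ)] equals ∫∫ φ(w_i,w_j) K_H(dw_i,dw_j), and (b) E_{F_τ⊗F_τ}[α₀(X_i,X_j)(c₁(Y_i − γ_τ(X_i)) + c₂(Y_j − γ_τ(X_j)))] = 0 for every τ ∈ [0,τ̄). -/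
/-!
Part (b) is Fubini: for fixed `x'` the section `α₀(·, x')` lies in `Γ`, so the inner integral of
`α₀(X, x') (Y - γ_τ(X))` against `F_τ` vanishes by the orthogonality condition defining `γ_τ`,
and likewise in the other coordinate.

For part (a), the orthogonality condition holds identically along the mixture path `F_τ`;
differentiating it at `τ = 0` gives `E_{F₀}[ν γ̇] = E_H[ν (Y - γ₀)]` for every bounded `ν ∈ Γ`.
Since `c₁ γ_τ(x_i) + c₂ γ_τ(x_j) ∈ S`, the projection property replaces `δ` by `α₀` in the
linearized functional, whose right derivative is `E_{F₀⊗F₀}[α₀ (c₁ γ̇(X_i) + c₂ γ̇(X_j))]`.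
Expanding `∫ φ dK_H` by Fubini, the terms with the `F₀`-residual vanish by orthogonality at
`τ = 0`, and those with the `H`-residual become the `γ̇` terms by the identity above.
-/

open MeasureTheory Filter Topology Set

section Integration

variable {α β : Type*} [MeasurableSpace α] [MeasurableSpace β]

theorem integral_ofReal_smul_add_ofReal_smul {μ ν : Measure α} {f : α → ℝ}
    (hμ : Integrable f μ) (hν : Integrable f ν) {s t : ℝ} (hs : 0 ≤ s) (ht : 0 ≤ t) :
    ∫ x, f x ∂(ENNReal.ofReal s • μ + ENNReal.ofReal t • ν)
      = s * ∫ x, f x ∂μ + t * ∫ x, f x ∂ν := by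
  rw [integral_add_measure (hμ.smul_measure ENNReal.ofReal_ne_top)
      (hν.smul_measure ENNReal.ofReal_ne_top), integral_smul_measure, integral_smul_measure,
    ENNReal.toReal_ofReal hs, ENNReal.toReal_ofReal ht, smul_eq_mul, smul_eq_mul]

instance isFiniteMeasure_ofReal_smul {μ : Measure α} [IsFiniteMeasure μ] {s : ℝ} :
    IsFiniteMeasure (ENNReal.ofReal s • μ) :=
  μ.smul_finite ENNReal.ofReal_ne_top

theorem measurePreserving_swap_prod_add_prod (μ ν : Measure α) [SFinite μ] [SFinite ν] :
    MeasurePreserving Prod.swap (μ.prod ν + ν.prod μ) (μ.prod ν + ν.prod μ) where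
  measurable := measurable_swap
  map_eq := by rw [Measure.map_add _ _ measurable_swap, Measure.prod_swap, Measure.prod_swap,
    add_comm]

theorem integral_comp_prodMap {γ δ : Type*} [MeasurableSpace γ] [MeasurableSpace δ]
    {μ : Measure α} {ν : Measure β} [SFinite μ] [SFinite ν] {u : α → γ} {v : β → δ}
    (hu : Measurable u) (hv : Measurable v) {f : γ × δ → ℝ}
    (hf : AEStronglyMeasurable f ((μ.map u).prod (ν.map v))) :
    ∫ p, f (u p.1, v p.2) ∂(μ.prod ν) = ∫ q, f q ∂((μ.map u).prod (ν.map v)) := by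
  rw [Measure.map_prod_map μ ν hu hv] at hf ⊢
  rw [integral_map (hu.prodMap hv).aemeasurable hf]
  rfl

theorem integral_mul_eq_of_sub_orthogonal {ρ : Measure α} [IsFiniteMeasure ρ] {f a s : α → ℝ}
    {C : ℝ} (hf : MemLp f 2 ρ) (ha : AEStronglyMeasurable a ρ) (haC : ∀ x, |a x| ≤ C)
    (hs : MemLp s 2 ρ) (horth : ∫ x, (f x - a x) * s x ∂ρ = 0) :
    ∫ x, f x * s x ∂ρ = ∫ x, a x * s x ∂ρ := by
  have hfs : Integrable (fun x => f x * s x) ρ := hf.integrable_mul hs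
  rw [← sub_eq_zero, ← integral_sub hfs ((hs.integrable one_le_two).bdd_mul ha (ae_of_all _ haC))]
  simpa only [sub_mul] using horth

theorem hasDerivWithinAt_integral_Ici {ρ : Measure α} [IsFiniteMeasure ρ] {G : ℝ → α → ℝ}
    {G' : α → ℝ} {t₀ C : ℝ} (hint : ∀ᶠ t in 𝓝[≥] t₀, Integrable (G t) ρ)
    (hlip : ∀ᶠ t in 𝓝[>] t₀, ∀ x, |G t x - G t₀ x| ≤ C * (t - t₀))
    (hderiv : ∀ x, HasDerivWithinAt (G · x) (G' x) (Ici t₀) t₀) :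
    HasDerivWithinAt (fun t => ∫ x, G t x ∂ρ) (∫ x, G' x ∂ρ) (Ici t₀) t₀ := by
  simp only [hasDerivWithinAt_iff_tendsto_slope, Ici_sdiff_left] at hderiv ⊢
  have hint' : ∀ᶠ t in 𝓝[>] t₀, Integrable (G t) ρ :=
    hint.filter_mono (nhdsWithin_mono _ Ioi_subset_Ici_self)
  have hint₀ : Integrable (G t₀) ρ := hint.self_of_nhdsWithin self_mem_Ici
  have hslope : Tendsto (fun t => ∫ x, slope (G · x) t₀ t ∂ρ) (𝓝[>] t₀)
      (𝓝 (∫ x, G' x ∂ρ)) := by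
    refine tendsto_integral_filter_of_norm_le_const ?_ ⟨C, ?_⟩ (ae_of_all _ hderiv)
    · filter_upwards [hint'] with t ht
      simp only [slope_def_module]
      exact (ht.sub hint₀).aestronglyMeasurable.const_smul ((t - t₀)⁻¹)
    · filter_upwards [hlip, self_mem_nhdsWithin] with t ht (htpos : t₀ < t)
      refine ae_of_all _ fun x => ?_
      rw [slope_def_field, norm_div, Real.norm_eq_abs, Real.norm_eq_abs,
        abs_of_pos (sub_pos.2 htpos), div_le_iff₀ (sub_pos.2 htpos)]
      exact ht x
  refine hslope.congr' ?_
  filter_upwards [hint'] with t ht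
  simp only [slope_def_module]
  rw [integral_smul, integral_sub ht hint₀]

end Integration

section UniformSlope

variable {ι : Type*} {γ : ℝ → ι → ℝ} {γ' : ι → ℝ}

theorem hasDerivWithinAt_Ici_of_uniform_slope
    (hγ : ∀ ε > (0:ℝ), ∃ δ > (0:ℝ), ∀ τ : ℝ, 0 < τ → τ < δ →
      ∀ x, |γ τ x - γ 0 x - τ * γ' x| ≤ ε * τ) (x : ι) :
    HasDerivWithinAt (γ · x) (γ' x) (Ici 0) 0 := by
  refine hasDerivWithinAt_iff_isLittleO.2 (Asymptotics.isLittleO_iff.2 fun ε hε => ?_)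
  obtain ⟨δ, hδ, hbound⟩ := hγ ε hε
  filter_upwards [Ico_mem_nhdsGE hδ] with τ ⟨hτ₀, hτδ⟩
  rcases hτ₀.eq_or_lt with rfl | hτpos
  · simp
  · simpa [abs_of_pos hτpos] using hbound τ hτpos hτδ x

theorem eventually_abs_sub_le_of_uniform_slope
    (hγ : ∀ ε > (0:ℝ), ∃ δ > (0:ℝ), ∀ τ : ℝ, 0 < τ → τ < δ →
      ∀ x, |γ τ x - γ 0 x - τ * γ' x| ≤ ε * τ) {M : ℝ} (hM : ∀ x, |γ' x| ≤ M) :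
    ∀ᶠ τ in 𝓝[>] 0, ∀ x, |γ τ x - γ 0 x| ≤ (M + 1) * τ := by
  obtain ⟨δ, hδ, hbound⟩ := hγ 1 one_pos
  filter_upwards [Ioo_mem_nhdsGT hδ] with τ ⟨hτpos, hτδ⟩ x
  calc |γ τ x - γ 0 x| = |(γ τ x - γ 0 x - τ * γ' x) + τ * γ' x| := by rw [sub_add_cancel]
    _ ≤ |γ τ x - γ 0 x - τ * γ' x| + |τ * γ' x| := abs_add_le _ _
    _ ≤ 1 * τ + τ * M := by
      rw [abs_mul, abs_of_pos hτpos]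
      exact add_le_add (hbound τ hτpos hτδ x) (mul_le_mul_of_nonneg_left (hM x) hτpos.le)
    _ = (M + 1) * τ := by ring

end UniformSlope

section KernelMoments

variable {𝒳 : Type*} [MeasurableSpace 𝒳] {k : 𝒳 → 𝒳 → ℝ} {C : ℝ}

theorem measurable_kernel_snd_snd (hk : Measurable (Function.uncurry k)) :
    Measurable fun p : (ℝ × 𝒳) × (ℝ × 𝒳) => k p.1.2 p.2.2 :=
  hk.comp (measurable_fst.snd.prodMk measurable_snd.snd)

theorem integrable_kernel_mul_fst {F G : Measure (ℝ × 𝒳)} [IsFiniteMeasure G]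
    (hk : Measurable (Function.uncurry k)) (hkC : ∀ x x', |k x x'| ≤ C) {u : ℝ × 𝒳 → ℝ}
    (hu : Integrable u F) :
    Integrable (fun p : (ℝ × 𝒳) × (ℝ × 𝒳) => k p.1.2 p.2.2 * u p.1) (F.prod G) :=
  (hu.comp_fst G).bdd_mul (measurable_kernel_snd_snd hk).aestronglyMeasurable
    (ae_of_all _ fun p => hkC p.1.2 p.2.2)

theorem integrable_kernel_mul_snd {F G : Measure (ℝ × 𝒳)} [IsFiniteMeasure F] [SFinite G]
    (hk : Measurable (Function.uncurry k)) (hkC : ∀ x x', |k x x'| ≤ C) {u : ℝ × 𝒳 → ℝ}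
    (hu : Integrable u G) :
    Integrable (fun p : (ℝ × 𝒳) × (ℝ × 𝒳) => k p.1.2 p.2.2 * u p.2) (F.prod G) :=
  (hu.comp_snd F).bdd_mul (measurable_kernel_snd_snd hk).aestronglyMeasurable
    (ae_of_all _ fun p => hkC p.1.2 p.2.2)

theorem integral_kernel_mul_add {μ : Measure ((ℝ × 𝒳) × (ℝ × 𝒳))}
    (hμ : MeasurePreserving Prod.swap μ μ) {u : ℝ × 𝒳 → ℝ}
    (h₁ : Integrable (fun p => k p.1.2 p.2.2 * u p.1) μ)
    (h₂ : Integrable (fun p => k p.1.2 p.2.2 * u p.2) μ) (c₁ c₂ : ℝ) :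
    ∫ p, k p.1.2 p.2.2 * (c₁ * u p.1 + c₂ * u p.2) ∂μ
      = c₁ * ∫ p, k p.1.2 p.2.2 * u p.1 ∂μ + c₂ * ∫ p, k p.2.2 p.1.2 * u p.1 ∂μ := by
  have hswap : ∫ p, k p.2.2 p.1.2 * u p.1 ∂μ = ∫ p, k p.1.2 p.2.2 * u p.2 ∂μ :=
    (hμ.integral_comp MeasurableEquiv.prodComm.measurableEmbedding
      (fun p => k p.2.2 p.1.2 * u p.1)).symm
  rw [hswap, ← integral_const_mul, ← integral_const_mul,
    ← integral_add (h₁.const_mul c₁) (h₂.const_mul c₂)]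
  exact integral_congr_ae (ae_of_all _ fun p => by ring)

theorem integral_kernel_mul_fst_eq_zero {F G : Measure (ℝ × 𝒳)} [IsFiniteMeasure F]
    [IsFiniteMeasure G] (hk : Measurable (Function.uncurry k)) (hkC : ∀ x x', |k x x'| ≤ C)
    {u : ℝ × 𝒳 → ℝ} (hu : Integrable u F) (horth : ∀ x', ∫ w, k w.2 x' * u w ∂F = 0) :
    ∫ p, k p.1.2 p.2.2 * u p.1 ∂(F.prod G) = 0 := by
  rw [integral_prod_symm _ (integrable_kernel_mul_fst hk hkC hu)]
  simp [horth]

theorem integral_kernel_mul_fst_congr {F F' G : Measure (ℝ × 𝒳)} [IsFiniteMeasure F]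
    [IsFiniteMeasure F'] [IsFiniteMeasure G] (hk : Measurable (Function.uncurry k))
    (hkC : ∀ x x', |k x x'| ≤ C) {u u' : ℝ × 𝒳 → ℝ} (hu : Integrable u F)
    (hu' : Integrable u' F') (h : ∀ x', ∫ w, k w.2 x' * u w ∂F = ∫ w, k w.2 x' * u' w ∂F') :
    ∫ p, k p.1.2 p.2.2 * u p.1 ∂(F.prod G) = ∫ p, k p.1.2 p.2.2 * u' p.1 ∂(F'.prod G) := by
  rw [integral_prod_symm _ (integrable_kernel_mul_fst hk hkC hu),
    integral_prod_symm _ (integrable_kernel_mul_fst hk hkC hu')]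
  exact integral_congr_ae (ae_of_all _ fun w => h w.2)

end KernelMoments

section FirstStep

variable {𝒳 : Type*} [MeasurableSpace 𝒳] {γ : ℝ → 𝒳 → ℝ} {γ' : 𝒳 → ℝ} {L : ℝ}

theorem hasDerivWithinAt_integral_mul_residual {F : Measure (ℝ × 𝒳)} [IsFiniteMeasure F]
    {ν : 𝒳 → ℝ} {C : ℝ} (hν : Measurable ν) (hνC : ∀ x, |ν x| ≤ C)
    (hderiv : ∀ x, HasDerivWithinAt (γ · x) (γ' x) (Ici 0) 0)
    (hlip : ∀ᶠ τ in 𝓝[>] 0, ∀ x, |γ τ x - γ 0 x| ≤ L * τ)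
    (hres : ∀ᶠ τ in 𝓝[≥] 0, Integrable (fun w : ℝ × 𝒳 => w.1 - γ τ w.2) F) :
    HasDerivWithinAt (fun τ => ∫ w, ν w.2 * (w.1 - γ τ w.2) ∂F)
      (-∫ w, ν w.2 * γ' w.2 ∂F) (Ici 0) 0 := by
  have h := hasDerivWithinAt_integral_Ici (C := C * L)
    (G := fun τ (w : ℝ × 𝒳) => ν w.2 * (w.1 - γ τ w.2))
    (hres.mono fun τ hτ => hτ.bdd_mul (hν.comp measurable_snd).aestronglyMeasurable
      (ae_of_all _ fun w => hνC w.2))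
    (hlip.mono fun τ hτ w => ?_)
    fun w => ((hasDerivWithinAt_const 0 _ w.1).sub (hderiv w.2)).const_mul (ν w.2)
  · simpa only [zero_sub, mul_neg, integral_neg] using h
  · rw [show ν w.2 * (w.1 - γ τ w.2) - ν w.2 * (w.1 - γ 0 w.2) = -(ν w.2 * (γ τ w.2 - γ 0 w.2))
      by ring, abs_neg, abs_mul, sub_zero, mul_assoc]
    exact mul_le_mul (hνC w.2) (hτ w.2) (abs_nonneg _) ((abs_nonneg _).trans (hνC w.2))

theorem integral_mul_deriv_eq_integral_mul_residual {F₀ H : Measure (ℝ × 𝒳)}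
    [IsFiniteMeasure F₀] [IsFiniteMeasure H] {ν : 𝒳 → ℝ} {C : ℝ} (hν : Measurable ν)
    (hνC : ∀ x, |ν x| ≤ C) (hderiv : ∀ x, HasDerivWithinAt (γ · x) (γ' x) (Ici 0) 0)
    (hlip : ∀ᶠ τ in 𝓝[>] 0, ∀ x, |γ τ x - γ 0 x| ≤ L * τ)
    (hres : ∀ᶠ τ in 𝓝[≥] 0, Integrable (fun w : ℝ × 𝒳 => w.1 - γ τ w.2) F₀ ∧
      Integrable (fun w : ℝ × 𝒳 => w.1 - γ τ w.2) H)
    (horth : ∀ᶠ τ in 𝓝[≥] 0, ∫ w, ν w.2 * (w.1 - γ τ w.2)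
      ∂(ENNReal.ofReal (1 - τ) • F₀ + ENNReal.ofReal τ • H) = 0) :
    ∫ w, ν w.2 * γ' w.2 ∂F₀ = ∫ w, ν w.2 * (w.1 - γ 0 w.2) ∂H := by
  have hmoment (F : Measure (ℝ × 𝒳)) [IsFiniteMeasure F]
      (hF : ∀ᶠ τ in 𝓝[≥] 0, Integrable (fun w : ℝ × 𝒳 => w.1 - γ τ w.2) F) :=
    hasDerivWithinAt_integral_mul_residual hν hνC hderiv hlip hF
  have hmix : (fun τ => (1 - τ) * ∫ w, ν w.2 * (w.1 - γ τ w.2) ∂F₀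
      + τ * ∫ w, ν w.2 * (w.1 - γ τ w.2) ∂H) =ᶠ[𝓝[≥] 0] fun _ => 0 := by
    filter_upwards [horth, hres, Ico_mem_nhdsGE one_pos] with τ hτ ⟨hF₀, hH⟩ ⟨hτ₀, hτ₁⟩
    have hνr {F : Measure (ℝ × 𝒳)} (hF : Integrable (fun w : ℝ × 𝒳 => w.1 - γ τ w.2) F) :
        Integrable (fun w : ℝ × 𝒳 => ν w.2 * (w.1 - γ τ w.2)) F :=
      hF.bdd_mul (hν.comp measurable_snd).aestronglyMeasurable (ae_of_all _ fun w => hνC w.2)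
    rw [← hτ, integral_ofReal_smul_add_ofReal_smul (hνr hF₀) (hνr hH) (by linarith) hτ₀]
  have hderiv₀ := (((hasDerivWithinAt_id 0 (Ici 0)).const_sub 1).mul
    (hmoment F₀ (hres.mono fun _ h => h.1))).add
    ((hasDerivWithinAt_id 0 (Ici 0)).mul (hmoment H (hres.mono fun _ h => h.2)))
  have hzero := (uniqueDiffOn_Ici 0 0 self_mem_Ici).eq_deriv _ hderiv₀
    ((hasDerivWithinAt_const 0 _ 0).congr_of_eventuallyEq hmix
      (hmix.self_of_nhdsWithin self_mem_Ici))
  have hF₀ : ∫ w, ν w.2 * (w.1 - γ 0 w.2) ∂F₀ = 0 := by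
    simpa using hmix.self_of_nhdsWithin self_mem_Ici
  simp only [id, hF₀] at hzero
  linarith

end FirstStep

section Influence

variable {𝒳 : Type*} [MeasurableSpace 𝒳] {k : 𝒳 → 𝒳 → ℝ} {C : ℝ}

theorem hasDerivWithinAt_integral_kernel_mul_add {F : Measure (ℝ × 𝒳)} [IsFiniteMeasure F]
    (hk : Measurable (Function.uncurry k)) (hkC : ∀ x x', |k x x'| ≤ C)
    {γ : ℝ → 𝒳 → ℝ} {γ' : 𝒳 → ℝ} {L : ℝ}
    (hγ : ∀ᶠ τ in 𝓝[≥] 0, Integrable (fun w : ℝ × 𝒳 => γ τ w.2) F)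
    (hderiv : ∀ x, HasDerivWithinAt (γ · x) (γ' x) (Ici 0) 0)
    (hlip : ∀ᶠ τ in 𝓝[>] 0, ∀ x, |γ τ x - γ 0 x| ≤ L * τ) (c₁ c₂ : ℝ) :
    HasDerivWithinAt
      (fun τ => ∫ p, k p.1.2 p.2.2 * (c₁ * γ τ p.1.2 + c₂ * γ τ p.2.2) ∂(F.prod F))
      (∫ p, k p.1.2 p.2.2 * (c₁ * γ' p.1.2 + c₂ * γ' p.2.2) ∂(F.prod F)) (Ici 0) 0 := by
  refine hasDerivWithinAt_integral_Ici
    (G := fun τ (p : (ℝ × 𝒳) × (ℝ × 𝒳)) => k p.1.2 p.2.2 * (c₁ * γ τ p.1.2 + c₂ * γ τ p.2.2))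
    (C := C * (|c₁| + |c₂|) * L)
    (hγ.mono fun τ hτ => (((hτ.comp_fst F).const_mul c₁).add ((hτ.comp_snd F).const_mul c₂)).bdd_mul
      (measurable_kernel_snd_snd hk).aestronglyMeasurable
      (ae_of_all _ fun p => hkC p.1.2 p.2.2))
    (hlip.mono fun τ hτ p => ?_)
    fun p => (((hderiv p.1.2).const_mul c₁).add ((hderiv p.2.2).const_mul c₂)).const_mul _
  have hC : 0 ≤ C := (abs_nonneg _).trans (hkC p.1.2 p.2.2)
  rw [show k p.1.2 p.2.2 * (c₁ * γ τ p.1.2 + c₂ * γ τ p.2.2)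
      - k p.1.2 p.2.2 * (c₁ * γ 0 p.1.2 + c₂ * γ 0 p.2.2)
      = k p.1.2 p.2.2 * (c₁ * (γ τ p.1.2 - γ 0 p.1.2) + c₂ * (γ τ p.2.2 - γ 0 p.2.2)) by ring,
    abs_mul, sub_zero]
  calc |k p.1.2 p.2.2| * |c₁ * (γ τ p.1.2 - γ 0 p.1.2) + c₂ * (γ τ p.2.2 - γ 0 p.2.2)|
      ≤ C * (|c₁| * (L * τ) + |c₂| * (L * τ)) := by
        refine mul_le_mul (hkC _ _) ((abs_add_le _ _).trans ?_) (abs_nonneg _) hC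
        rw [abs_mul, abs_mul]
        exact add_le_add (mul_le_mul_of_nonneg_left (hτ _) (abs_nonneg _))
          (mul_le_mul_of_nonneg_left (hτ _) (abs_nonneg _))
    _ = C * (|c₁| + |c₂|) * L * τ := by ring

theorem integral_prod_mul_eq_of_orthogonal {F : Measure (ℝ × 𝒳)} [IsFiniteMeasure F]
    {f a s : 𝒳 × 𝒳 → ℝ} (hf : MemLp f 2 ((F.map Prod.snd).prod (F.map Prod.snd)))
    (ha : Measurable a) (haC : ∀ q, |a q| ≤ C)
    (hs : MemLp s 2 ((F.map Prod.snd).prod (F.map Prod.snd)))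
    (horth : ∫ q, (f q - a q) * s q ∂((F.map Prod.snd).prod (F.map Prod.snd)) = 0) :
    ∫ p, f (p.1.2, p.2.2) * s (p.1.2, p.2.2) ∂(F.prod F)
      = ∫ p, a (p.1.2, p.2.2) * s (p.1.2, p.2.2) ∂(F.prod F) := by
  rw [integral_comp_prodMap (f := fun q => f q * s q) measurable_snd measurable_snd
      (hf.1.mul hs.1),
    integral_comp_prodMap (f := fun q => a q * s q) measurable_snd measurable_snd
      (ha.aestronglyMeasurable.mul hs.1)]
  exact integral_mul_eq_of_sub_orthogonal hf ha.aestronglyMeasurable haC hs horth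

theorem eq_integral_kernel_mul_deriv_of_projection {F : Measure (ℝ × 𝒳)} [IsFiniteMeasure F]
    {δ : 𝒳 → 𝒳 → ℝ} (hδ : MemLp (fun q : 𝒳 × 𝒳 => δ q.1 q.2) 2
      ((F.map Prod.snd).prod (F.map Prod.snd)))
    (hk : Measurable (Function.uncurry k)) (hkC : ∀ x x', |k x x'| ≤ C)
    {γ : ℝ → 𝒳 → ℝ} {γ' : 𝒳 → ℝ} {L c₁ c₂ D : ℝ}
    (hγ : ∀ᶠ τ in 𝓝[≥] 0, Integrable (fun w : ℝ × 𝒳 => γ τ w.2) F)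
    (hderiv : ∀ x, HasDerivWithinAt (γ · x) (γ' x) (Ici 0) 0)
    (hlip : ∀ᶠ τ in 𝓝[>] 0, ∀ x, |γ τ x - γ 0 x| ≤ L * τ)
    (hs : ∀ᶠ τ in 𝓝[≥] 0, MemLp (fun q : 𝒳 × 𝒳 => c₁ * γ τ q.1 + c₂ * γ τ q.2) 2
      ((F.map Prod.snd).prod (F.map Prod.snd)))
    (horth : ∀ᶠ τ in 𝓝[≥] 0, ∫ q, (δ q.1 q.2 - k q.1 q.2) * (c₁ * γ τ q.1 + c₂ * γ τ q.2)
      ∂((F.map Prod.snd).prod (F.map Prod.snd)) = 0)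
    (hD : HasDerivWithinAt
      (fun τ => ∫ p, δ p.1.2 p.2.2 * (c₁ * γ τ p.1.2 + c₂ * γ τ p.2.2) ∂(F.prod F)) D (Ici 0) 0) :
    D = ∫ p, k p.1.2 p.2.2 * (c₁ * γ' p.1.2 + c₂ * γ' p.2.2) ∂(F.prod F) := by
  have hδk : (fun τ => ∫ p, k p.1.2 p.2.2 * (c₁ * γ τ p.1.2 + c₂ * γ τ p.2.2) ∂(F.prod F))
      =ᶠ[𝓝[≥] 0] fun τ => ∫ p, δ p.1.2 p.2.2 * (c₁ * γ τ p.1.2 + c₂ * γ τ p.2.2) ∂(F.prod F) := by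
    filter_upwards [hs, horth] with τ hsτ horthτ
    exact (integral_prod_mul_eq_of_orthogonal (f := fun q => δ q.1 q.2)
      (a := fun q => k q.1 q.2) hδ hk (fun q => hkC q.1 q.2) hsτ horthτ).symm
  exact (uniqueDiffOn_Ici 0 0 self_mem_Ici).eq_deriv _ hD
    ((hasDerivWithinAt_integral_kernel_mul_add hk hkC hγ hderiv hlip c₁ c₂).congr_of_eventuallyEq
      hδk.symm (hδk.self_of_nhdsWithin self_mem_Ici).symm)

theorem integral_kernel_mul_add_eq_zero {F : Measure (ℝ × 𝒳)} [IsFiniteMeasure F]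
    (hk : Measurable (Function.uncurry k)) (hkC : ∀ x x', |k x x'| ≤ C) {u : ℝ × 𝒳 → ℝ}
    (hu : Integrable u F) (horth₁ : ∀ x', ∫ w, k w.2 x' * u w ∂F = 0)
    (horth₂ : ∀ x, ∫ w, k x w.2 * u w ∂F = 0) (c₁ c₂ : ℝ) :
    ∫ p, k p.1.2 p.2.2 * (c₁ * u p.1 + c₂ * u p.2) ∂(F.prod F) = 0 := by
  rw [integral_kernel_mul_add Measure.measurePreserving_swap
      (integrable_kernel_mul_fst hk hkC hu) (integrable_kernel_mul_snd hk hkC hu),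
    integral_kernel_mul_fst_eq_zero hk hkC hu horth₁,
    integral_kernel_mul_fst_eq_zero (k := fun x x' => k x' x) (hk.comp measurable_swap)
      (fun x x' => hkC x' x) hu horth₂, mul_zero, mul_zero, add_zero]

theorem integral_kernel_mul_fst_prod_add_prod {F₀ H : Measure (ℝ × 𝒳)} [IsFiniteMeasure F₀]
    [IsFiniteMeasure H] (hk : Measurable (Function.uncurry k)) (hkC : ∀ x x', |k x x'| ≤ C)
    {u : ℝ × 𝒳 → ℝ} {v : 𝒳 → ℝ} (hu₀ : Integrable u F₀) (huH : Integrable u H)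
    (hv : Integrable (fun w : ℝ × 𝒳 => v w.2) F₀) (horth : ∀ x', ∫ w, k w.2 x' * u w ∂F₀ = 0)
    (hH : ∀ x', ∫ w, k w.2 x' * u w ∂H = ∫ w, k w.2 x' * v w.2 ∂F₀) :
    ∫ p, k p.1.2 p.2.2 * u p.1 ∂(F₀.prod H + H.prod F₀)
      = ∫ p, k p.1.2 p.2.2 * v p.1.2 ∂(F₀.prod F₀) := by
  rw [integral_add_measure (integrable_kernel_mul_fst hk hkC hu₀)
      (integrable_kernel_mul_fst hk hkC huH), integral_kernel_mul_fst_eq_zero hk hkC hu₀ horth,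
    zero_add]
  exact integral_kernel_mul_fst_congr hk hkC huH hv hH

theorem integral_kernel_mul_add_prod_add_prod {F₀ H : Measure (ℝ × 𝒳)} [IsFiniteMeasure F₀]
    [IsFiniteMeasure H] (hk : Measurable (Function.uncurry k)) (hkC : ∀ x x', |k x x'| ≤ C)
    {u : ℝ × 𝒳 → ℝ} {v : 𝒳 → ℝ} (hu₀ : Integrable u F₀) (huH : Integrable u H)
    (hv : Integrable (fun w : ℝ × 𝒳 => v w.2) F₀)
    (horth₁ : ∀ x', ∫ w, k w.2 x' * u w ∂F₀ = 0) (horth₂ : ∀ x, ∫ w, k x w.2 * u w ∂F₀ = 0)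
    (hH₁ : ∀ x', ∫ w, k w.2 x' * u w ∂H = ∫ w, k w.2 x' * v w.2 ∂F₀)
    (hH₂ : ∀ x, ∫ w, k x w.2 * u w ∂H = ∫ w, k x w.2 * v w.2 ∂F₀) (c₁ c₂ : ℝ) :
    ∫ p, k p.1.2 p.2.2 * (c₁ * u p.1 + c₂ * u p.2) ∂(F₀.prod H + H.prod F₀)
      = ∫ p, k p.1.2 p.2.2 * (c₁ * v p.1.2 + c₂ * v p.2.2) ∂(F₀.prod F₀) := by
  have hkT : Measurable (Function.uncurry fun x x' => k x' x) := hk.comp measurable_swap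
  rw [integral_kernel_mul_add (measurePreserving_swap_prod_add_prod F₀ H)
      ((integrable_kernel_mul_fst hk hkC hu₀).add_measure (integrable_kernel_mul_fst hk hkC huH))
      ((integrable_kernel_mul_snd hk hkC huH).add_measure (integrable_kernel_mul_snd hk hkC hu₀)),
    integral_kernel_mul_add (u := fun w => v w.2) Measure.measurePreserving_swap
      (integrable_kernel_mul_fst hk hkC hv) (integrable_kernel_mul_snd hk hkC hv),
    integral_kernel_mul_fst_prod_add_prod hk hkC hu₀ huH hv horth₁ hH₁,
    integral_kernel_mul_fst_prod_add_prod (k := fun x x' => k x' x) hkT (fun x x' => hkC x' x)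
      hu₀ huH hv horth₂ hH₂]

theorem integral_kernel_mul_residual_prod_add_prod {F₀ H : Measure (ℝ × 𝒳)} [IsFiniteMeasure F₀]
    [IsFiniteMeasure H] {Γ : Set (𝒳 → ℝ)} (hΓ : ∀ ν ∈ Γ, Measurable ν)
    (hk : Measurable (Function.uncurry k)) (hkC : ∀ x x', |k x x'| ≤ C)
    (hk₁ : ∀ x', (fun x => k x x') ∈ Γ) (hk₂ : ∀ x, (fun x' => k x x') ∈ Γ)
    {γ : ℝ → 𝒳 → ℝ} {γ' : 𝒳 → ℝ} {L M : ℝ} (hγ' : Measurable γ') (hγ'M : ∀ x, |γ' x| ≤ M)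
    (hderiv : ∀ x, HasDerivWithinAt (γ · x) (γ' x) (Ici 0) 0)
    (hlip : ∀ᶠ τ in 𝓝[>] 0, ∀ x, |γ τ x - γ 0 x| ≤ L * τ)
    (hres : ∀ᶠ τ in 𝓝[≥] 0, Integrable (fun w : ℝ × 𝒳 => w.1 - γ τ w.2) F₀ ∧
      Integrable (fun w : ℝ × 𝒳 => w.1 - γ τ w.2) H)
    (horth : ∀ᶠ τ in 𝓝[≥] 0, ∀ ν ∈ Γ, ∫ w, ν w.2 * (w.1 - γ τ w.2)
      ∂(ENNReal.ofReal (1 - τ) • F₀ + ENNReal.ofReal τ • H) = 0) (c₁ c₂ : ℝ) :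
    ∫ p, k p.1.2 p.2.2 * (c₁ * (p.1.1 - γ 0 p.1.2) + c₂ * (p.2.1 - γ 0 p.2.2))
      ∂(F₀.prod H + H.prod F₀)
      = ∫ p, k p.1.2 p.2.2 * (c₁ * γ' p.1.2 + c₂ * γ' p.2.2) ∂(F₀.prod F₀) := by
  have hH (ν) (hν : ν ∈ Γ) (hνC : ∀ x, |ν x| ≤ C) :
      ∫ w, ν w.2 * (w.1 - γ 0 w.2) ∂H = ∫ w, ν w.2 * γ' w.2 ∂F₀ :=
    (integral_mul_deriv_eq_integral_mul_residual (hΓ ν hν) hνC hderiv hlip hres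
      (horth.mono fun _ h => h ν hν)).symm
  have hF₀ : ∀ ν ∈ Γ, ∫ w, ν w.2 * (w.1 - γ 0 w.2) ∂F₀ = 0 := by
    simpa using horth.self_of_nhdsWithin self_mem_Ici
  have hres₀ := hres.self_of_nhdsWithin self_mem_Ici
  exact integral_kernel_mul_add_prod_add_prod (u := fun w => w.1 - γ 0 w.2) hk hkC hres₀.1 hres₀.2
    (Integrable.of_bound (hγ'.comp measurable_snd).aestronglyMeasurable M
      (ae_of_all _ fun w => hγ'M w.2))
    (fun x' => hF₀ _ (hk₁ x')) (fun x => hF₀ _ (hk₂ x))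
    (fun x' => hH _ (hk₁ x') fun x => hkC x x') (fun x => hH _ (hk₂ x) (hkC x)) c₁ c₂

end Influence

theorem UFSIF_for_orthogonal_first_steps_general
    {𝒳 : Type*} [MeasurableSpace 𝒳]
    (F₀ H : Measure (ℝ × 𝒳)) [IsProbabilityMeasure F₀] [IsProbabilityMeasure H]
    (μ₀ μH : Measure 𝒳)
    (hμ₀ : μ₀ = F₀.map Prod.snd) (hμH : μH = H.map Prod.snd)
    (τbar : ℝ) (hτbar : 0 < τbar)
    (Fτ : ℝ → Measure (ℝ × 𝒳))
    (hFτ : ∀ τ, Fτ τ = ENNReal.ofReal (1 - τ) • F₀ + ENNReal.ofReal τ • H)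
    -- Γ: closed linear subspace of L²(μ₀) containing constants, square-integrable
    -- under the X-marginal of H (closedness is not needed once projections are
    -- characterized by orthogonality, so it is not assumed)
    (Γ : Set (𝒳 → ℝ))
    (hΓ_smul : ∀ (c : ℝ), ∀ f ∈ Γ, (fun x => c * f x) ∈ Γ)
    (hΓ_meas : ∀ f ∈ Γ, Measurable f)
    (hΓ_L2 : ∀ f ∈ Γ, MemLp f 2 μ₀)
    (hΓ_L2H : ∀ f ∈ Γ, MemLp f 2 μH)
    -- the first-step path: γ_τ ∈ Γ solves the orthogonality condition under F_τ
    (γpath : ℝ → 𝒳 → ℝ)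
    (hγΓ : ∀ τ ∈ Set.Ico 0 τbar, γpath τ ∈ Γ)
    (horth : ∀ τ ∈ Set.Ico 0 τbar, ∀ ν ∈ Γ,
      (∫ w : ℝ × 𝒳, ν w.2 * (w.1 - γpath τ w.2) ∂(Fτ τ)) = 0)
    -- S ⊇ Γ + Γ and α₀ = Π_S δ, bounded, with both sections in Γ
    (S : Set (𝒳 × 𝒳 → ℝ))
    (hS_sub : ∀ ν ∈ Γ, ∀ w ∈ Γ, (fun p : 𝒳 × 𝒳 => ν p.1 + w p.2) ∈ S)
    (hS_L2 : ∀ s ∈ S, MemLp s 2 (μ₀.prod μ₀))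
    (δ : 𝒳 → 𝒳 → ℝ)
    (hδ_L2 : MemLp (fun p : 𝒳 × 𝒳 => δ p.1 p.2) 2 (μ₀.prod μ₀))
    (α₀ : 𝒳 → 𝒳 → ℝ)
    (hα₀_meas : Measurable (Function.uncurry α₀))
    (hα₀_proj : ∀ s ∈ S,
      (∫ p : 𝒳 × 𝒳, (δ p.1 p.2 - α₀ p.1 p.2) * s p ∂(μ₀.prod μ₀)) = 0)
    (Cα : ℝ) (hα₀_bdd : ∀ x x', |α₀ x x'| ≤ Cα)
    (hα₀_sec₁ : ∀ x, (fun x' => α₀ x' x) ∈ Γ)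
    (hα₀_sec₂ : ∀ x, (fun x' => α₀ x x') ∈ Γ)
    -- the identifying quadratic moment and the linearization hypothesis
    (g : (ℝ × 𝒳) → (ℝ × 𝒳) → (𝒳 → ℝ) → ℝ → ℝ)
    (θ c₁ c₂ : ℝ)
    (hlin : ∃ D : ℝ,
      HasDerivWithinAt
        (fun τ : ℝ => ∫ p : (ℝ × 𝒳) × (ℝ × 𝒳), g p.1 p.2 (γpath τ) θ ∂(F₀.prod F₀))
        D (Set.Ici 0) 0
      ∧ HasDerivWithinAt
        (fun τ : ℝ => ∫ p : (ℝ × 𝒳) × (ℝ × 𝒳),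
          δ p.1.2 p.2.2 * (c₁ * γpath τ p.1.2 + c₂ * γpath τ p.2.2) ∂(F₀.prod F₀))
        D (Set.Ici 0) 0)
    -- regularity: Y integrable under F₀ and H; the path has a bounded derivative γ̇
    (hYF₀ : Integrable (fun w : ℝ × 𝒳 => w.1) F₀)
    (hYH : Integrable (fun w : ℝ × 𝒳 => w.1) H)
    (γdot : 𝒳 → ℝ) (hγdot_meas : Measurable γdot)
    (M : ℝ) (hγdot_bdd : ∀ x, |γdot x| ≤ M)
    (hpath : ∀ ε > (0:ℝ), ∃ δ' > (0:ℝ), ∀ τ : ℝ, 0 < τ → τ < δ' →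
      ∀ x, |γpath τ x - γpath 0 x - τ * γdot x| ≤ ε * τ) :
    -- (a): the right derivative of the g-functional at τ = 0 equals ∫∫ φ dK_H
    HasDerivWithinAt
      (fun τ : ℝ => ∫ p : (ℝ × 𝒳) × (ℝ × 𝒳), g p.1 p.2 (γpath τ) θ ∂(F₀.prod F₀))
      (∫ p : (ℝ × 𝒳) × (ℝ × 𝒳),
        α₀ p.1.2 p.2.2 *
          (c₁ * p.1.1 + c₂ * p.2.1 - c₁ * γpath 0 p.1.2 - c₂ * γpath 0 p.2.2)
        ∂(F₀.prod H + H.prod F₀))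
      (Set.Ici 0) 0
    -- (b): the zero-mean property under F_τ ⊗ F_τ for every τ ∈ [0, τ̄)
    ∧ ∀ τ ∈ Set.Ico 0 τbar,
        (∫ p : (ℝ × 𝒳) × (ℝ × 𝒳),
          α₀ p.1.2 p.2.2 *
            (c₁ * (p.1.1 - γpath τ p.1.2) + c₂ * (p.2.1 - γpath τ p.2.2))
          ∂((Fτ τ).prod (Fτ τ))) = 0 := by
  subst hμ₀ hμH
  have hev : ∀ᶠ τ in 𝓝[≥] (0:ℝ), τ ∈ Ico 0 τbar := Ico_mem_nhdsGE hτbar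
  have hγF₀ (τ) (hτ : τ ∈ Ico 0 τbar) : Integrable (fun w : ℝ × 𝒳 => γpath τ w.2) F₀ :=
    ((hΓ_L2 _ (hγΓ τ hτ)).integrable one_le_two).comp_measurable measurable_snd
  have hγH (τ) (hτ : τ ∈ Ico 0 τbar) : Integrable (fun w : ℝ × 𝒳 => γpath τ w.2) H :=
    ((hΓ_L2H _ (hγΓ τ hτ)).integrable one_le_two).comp_measurable measurable_snd
  have hsS (τ) (hτ : τ ∈ Ico 0 τbar) :
      (fun q : 𝒳 × 𝒳 => c₁ * γpath τ q.1 + c₂ * γpath τ q.2) ∈ S :=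
    hS_sub _ (hΓ_smul c₁ _ (hγΓ τ hτ)) _ (hΓ_smul c₂ _ (hγΓ τ hτ))
  have hderiv := hasDerivWithinAt_Ici_of_uniform_slope hpath
  have hlip := eventually_abs_sub_le_of_uniform_slope hpath hγdot_bdd
  obtain ⟨D, hg, hJ⟩ := hlin
  have hD := eq_integral_kernel_mul_deriv_of_projection hδ_L2 hα₀_meas hα₀_bdd (hev.mono hγF₀)
    hderiv hlip (hev.mono fun τ hτ => hS_L2 _ (hsS τ hτ))
    (hev.mono fun τ hτ => hα₀_proj _ (hsS τ hτ)) hJ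
  refine ⟨?_, fun τ hτ => ?_⟩
  · convert hg using 1
    rw [hD, ← integral_kernel_mul_residual_prod_add_prod hΓ_meas hα₀_meas hα₀_bdd hα₀_sec₁
      hα₀_sec₂ hγdot_meas hγdot_bdd hderiv hlip
      (hev.mono fun τ hτ => ⟨hYF₀.sub (hγF₀ τ hτ), hYH.sub (hγH τ hτ)⟩)
      (hev.mono fun τ hτ => hFτ τ ▸ horth τ hτ) c₁ c₂]
    exact integral_congr_ae (ae_of_all _ fun p => by ring)
  · rw [hFτ]
    exact integral_kernel_mul_add_eq_zero (u := fun w => w.1 - γpath τ w.2) hα₀_meas hα₀_bdd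
      (((hYF₀.sub (hγF₀ τ hτ)).smul_measure ENNReal.ofReal_ne_top).add_measure
        ((hYH.sub (hγH τ hτ)).smul_measure ENNReal.ofReal_ne_top))
      (fun x' => hFτ τ ▸ horth τ hτ _ (hα₀_sec₁ x')) (fun x => hFτ τ ▸ horth τ hτ _ (hα₀_sec₂ x))
      c₁ c₂

theorem UFSIF_for_orthogonal_first_steps
    {𝒳 : Type*} [MeasurableSpace 𝒳]
    (F₀ H : Measure (ℝ × 𝒳)) [IsProbabilityMeasure F₀] [IsProbabilityMeasure H]
    (μ₀ μH : Measure 𝒳)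
    (hμ₀ : μ₀ = F₀.map Prod.snd) (hμH : μH = H.map Prod.snd)
    (τbar : ℝ) (hτbar : 0 < τbar) (hτbar1 : τbar ≤ 1)
    (Fτ : ℝ → Measure (ℝ × 𝒳))
    (hFτ : ∀ τ, Fτ τ = ENNReal.ofReal (1 - τ) • F₀ + ENNReal.ofReal τ • H)
    -- Γ: closed linear subspace of L²(μ₀) containing constants, square-integrable
    -- under the X-marginal of H (closedness is not needed once projections are
    -- characterized by orthogonality, so it is not assumed)
    (Γ : Set (𝒳 → ℝ))
    (hΓ_const : ∀ c : ℝ, (fun _ => c) ∈ Γ)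
    (hΓ_add : ∀ f ∈ Γ, ∀ g' ∈ Γ, (fun x => f x + g' x) ∈ Γ)
    (hΓ_smul : ∀ (c : ℝ), ∀ f ∈ Γ, (fun x => c * f x) ∈ Γ)
    (hΓ_meas : ∀ f ∈ Γ, Measurable f)
    (hΓ_L2 : ∀ f ∈ Γ, MemLp f 2 μ₀)
    (hΓ_L2H : ∀ f ∈ Γ, MemLp f 2 μH)
    -- the first-step path: γ_τ ∈ Γ solves the orthogonality condition under F_τ
    (γpath : ℝ → 𝒳 → ℝ)
    (hγΓ : ∀ τ ∈ Set.Ico 0 τbar, γpath τ ∈ Γ)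
    (horth : ∀ τ ∈ Set.Ico 0 τbar, ∀ ν ∈ Γ,
      (∫ w : ℝ × 𝒳, ν w.2 * (w.1 - γpath τ w.2) ∂(Fτ τ)) = 0)
    -- S ⊇ Γ + Γ and α₀ = Π_S δ, bounded, with both sections in Γ
    (S : Set (𝒳 × 𝒳 → ℝ))
    (hS_sub : ∀ ν ∈ Γ, ∀ w ∈ Γ, (fun p : 𝒳 × 𝒳 => ν p.1 + w p.2) ∈ S)
    (hS_L2 : ∀ s ∈ S, MemLp s 2 (μ₀.prod μ₀))
    (δ : 𝒳 → 𝒳 → ℝ)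
    (hδ_meas : Measurable (Function.uncurry δ))
    (hδ_L2 : MemLp (fun p : 𝒳 × 𝒳 => δ p.1 p.2) 2 (μ₀.prod μ₀))
    (α₀ : 𝒳 → 𝒳 → ℝ)
    (hα₀_meas : Measurable (Function.uncurry α₀))
    (hα₀_mem : (fun p : 𝒳 × 𝒳 => α₀ p.1 p.2) ∈ S)
    (hα₀_proj : ∀ s ∈ S,
      (∫ p : 𝒳 × 𝒳, (δ p.1 p.2 - α₀ p.1 p.2) * s p ∂(μ₀.prod μ₀)) = 0)
    (Cα : ℝ) (hα₀_bdd : ∀ x x', |α₀ x x'| ≤ Cα)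
    (hα₀_sec₁ : ∀ x, (fun x' => α₀ x' x) ∈ Γ)
    (hα₀_sec₂ : ∀ x, (fun x' => α₀ x x') ∈ Γ)
    -- the identifying quadratic moment and the linearization hypothesis
    (g : (ℝ × 𝒳) → (ℝ × 𝒳) → (𝒳 → ℝ) → ℝ → ℝ)
    (θ c₁ c₂ : ℝ)
    (hlin : ∃ D : ℝ,
      HasDerivWithinAt
        (fun τ : ℝ => ∫ p : (ℝ × 𝒳) × (ℝ × 𝒳), g p.1 p.2 (γpath τ) θ ∂(F₀.prod F₀))
        D (Set.Ici 0) 0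
      ∧ HasDerivWithinAt
        (fun τ : ℝ => ∫ p : (ℝ × 𝒳) × (ℝ × 𝒳),
          δ p.1.2 p.2.2 * (c₁ * γpath τ p.1.2 + c₂ * γpath τ p.2.2) ∂(F₀.prod F₀))
        D (Set.Ici 0) 0)
    -- regularity: Y integrable under F₀ and H; the path has a bounded derivative γ̇
    (hYF₀ : Integrable (fun w : ℝ × 𝒳 => w.1) F₀)
    (hYH : Integrable (fun w : ℝ × 𝒳 => w.1) H)
    (γdot : 𝒳 → ℝ) (hγdot_meas : Measurable γdot)
    (M : ℝ) (hγdot_bdd : ∀ x, |γdot x| ≤ M)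
    (hpath : ∀ ε > (0:ℝ), ∃ δ' > (0:ℝ), ∀ τ : ℝ, 0 < τ → τ < δ' →
      ∀ x, |γpath τ x - γpath 0 x - τ * γdot x| ≤ ε * τ) :
    -- (a): the right derivative of the g-functional at τ = 0 equals ∫∫ φ dK_H
    HasDerivWithinAt
      (fun τ : ℝ => ∫ p : (ℝ × 𝒳) × (ℝ × 𝒳), g p.1 p.2 (γpath τ) θ ∂(F₀.prod F₀))
      (∫ p : (ℝ × 𝒳) × (ℝ × 𝒳),
        α₀ p.1.2 p.2.2 *
          (c₁ * p.1.1 + c₂ * p.2.1 - c₁ * γpath 0 p.1.2 - c₂ * γpath 0 p.2.2)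
        ∂(F₀.prod H + H.prod F₀))
      (Set.Ici 0) 0
    -- (b): the zero-mean property under F_τ ⊗ F_τ for every τ ∈ [0, τ̄)
    ∧ ∀ τ ∈ Set.Ico 0 τbar,
        (∫ p : (ℝ × 𝒳) × (ℝ × 𝒳),
          α₀ p.1.2 p.2.2 *
            (c₁ * (p.1.1 - γpath τ p.1.2) + c₂ * (p.2.1 - γpath τ p.2.2))
          ∂((Fτ τ).prod (Fτ τ))) = 0 :=
  UFSIF_for_orthogonal_first_steps_general F₀ H μ₀ μH hμ₀ hμH τbar hτbar Fτ hFτ Γ hΓ_smul hΓ_meas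
    hΓ_L2 hΓ_L2H γpath hγΓ horth S hS_sub hS_L2 δ hδ_L2 α₀ hα₀_meas hα₀_proj Cα hα₀_bdd hα₀_sec₁
    hα₀_sec₂ g θ c₁ c₂ hlin hYF₀ hYH γdot hγdot_meas M hγdot_bdd hpath
end

section
/- Let (𝒳,μ) be a probability space, Γ a closed linear subspace of L²(μ) containing the constant functions, and consider the product space (𝒳×𝒳, μ⊗μ) with coordinate projections (X_i,X_j) (so X_i and X_j are independent with law μ). Let S = {(x_i,x_j) ↦ ν(x_i) + w(x_j) : ν, w ∈ Γ} ⊆ L²(μ⊗μ), assumed to be a closed subspace. Then for every δ ∈ L²(μ⊗μ), the orthogonal projection of δ onto S equals (Π_Γ δ₁)(X_i) + (Π_Γ δ₂)(X_j) − E[δ(X_i,X_j)], where δ₁(X_i) = E[δ(X_i,X_j) | X_i], δ₂(X_j) = E[δ(X_i,X_j) | X_j], and Π_Γ denotes orthogonal projection in L²(μ) onto Γ. -/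
/-!
Write `C = ∫ δ` and `A(x, y) = pδ₁ x + pδ₂ y - C`. Testing the projection property of `pδ₁`
against the constant `1` shows `∫ pδ₁ = ∫ δ₁ = C`, and likewise `∫ pδ₂ = C`. Hence, by Fubini,
the `x`-marginal `∫ (δ - A)(x, y) dμ(y)` of the residual is `δ₁ x - pδ₁ x`, which is orthogonal
to every `ν ∈ Γ`; symmetrically the `y`-marginal is `δ₂ - pδ₂ ⟂ Γ`. Since `ν(x) + w(y)` depends
on one coordinate per summand, its inner product with `δ - A` only sees these marginals.
-/

open MeasureTheory

section Marginals

variable {α β : Type*} [MeasurableSpace α] [MeasurableSpace β]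
  {μ : Measure α} {ν : Measure β}

theorem integral_eq_of_integral_sub_mul_one_eq_zero {f g : α → ℝ} (hf : Integrable f μ)
    (hg : Integrable g μ) (h : ∫ x, (f x - g x) * 1 ∂μ = 0) :
    ∫ x, g x ∂μ = ∫ x, f x ∂μ := by
  simp only [mul_one] at h
  rw [integral_sub hf hg, sub_eq_zero] at h
  exact h.symm

theorem integral_prod_mul_fst [SFinite μ] [SFinite ν] {F : α × β → ℝ} {g : α → ℝ}
    (h : Integrable (fun p => F p * g p.1) (μ.prod ν)) :
    ∫ p, F p * g p.1 ∂(μ.prod ν) = ∫ x, (∫ y, F (x, y) ∂ν) * g x ∂μ := by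
  simp only [integral_prod _ h, integral_mul_const]

theorem integral_prod_mul_snd [SFinite μ] [SFinite ν] {F : α × β → ℝ} {g : β → ℝ}
    (h : Integrable (fun p => F p * g p.2) (μ.prod ν)) :
    ∫ p, F p * g p.2 ∂(μ.prod ν) = ∫ y, (∫ x, F (x, y) ∂μ) * g y ∂ν := by
  simp only [integral_prod_symm _ h, integral_mul_const]

theorem ae_integral_sub_add_sub_left [IsProbabilityMeasure ν] [SFinite μ] {δ : α × β → ℝ}
    (hδ : Integrable δ (μ.prod ν)) (a : α → ℝ) {b : β → ℝ} (hb : Integrable b ν) {c : ℝ}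
    (hc : ∫ y, b y ∂ν = c) :
    ∀ᵐ x ∂μ, ∫ y, (δ (x, y) - (a x + b y - c)) ∂ν = ∫ y, δ (x, y) ∂ν - a x := by
  filter_upwards [hδ.prod_right_ae] with x hx
  have hab : Integrable (fun y => a x + b y) ν := (integrable_const _).add hb
  have habc : Integrable (fun y => a x + b y - c) ν := hab.sub (integrable_const c)
  rw [integral_sub hx habc, integral_sub hab (integrable_const c),
    integral_add (integrable_const _) hb, hc]
  simp

theorem ae_integral_sub_add_sub_right [IsProbabilityMeasure μ] [SFinite ν] {δ : α × β → ℝ}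
    (hδ : Integrable δ (μ.prod ν)) {a : α → ℝ} (ha : Integrable a μ) (b : β → ℝ) {c : ℝ}
    (hc : ∫ x, a x ∂μ = c) :
    ∀ᵐ y ∂ν, ∫ x, (δ (x, y) - (a x + b y - c)) ∂μ = ∫ x, δ (x, y) ∂μ - b y := by
  filter_upwards [hδ.prod_left_ae] with y hy
  have hab : Integrable (fun x => a x + b y) μ := ha.add (integrable_const _)
  have habc : Integrable (fun x => a x + b y - c) μ := hab.sub (integrable_const c)
  rw [integral_sub hy habc, integral_sub hab (integrable_const c),
    integral_add ha (integrable_const _), hc]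
  simp

end Marginals

theorem proj_onto_sum_subspace_eq_sum_of_marginal_projections_general
    {𝒳 : Type*} [MeasurableSpace 𝒳]
    (μ : Measure 𝒳) [IsProbabilityMeasure μ]
    (Γ : Set (𝒳 → ℝ))
    (hΓ_const : ∀ c : ℝ, (fun _ => c) ∈ Γ)
    (hΓ_add : ∀ f ∈ Γ, ∀ g ∈ Γ, (fun x => f x + g x) ∈ Γ)
    (hΓ_L2 : ∀ f ∈ Γ, MemLp f 2 μ)
    (δ : 𝒳 × 𝒳 → ℝ)
    (hδ_L2 : MemLp δ 2 (μ.prod μ))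
    -- pδ₁ = Π_Γ δ₁ where δ₁(x) = E[δ(X_i,X_j) | X_i = x] = ∫ δ(x,y) μ(dy)
    (pδ₁ : 𝒳 → ℝ) (hpδ₁_mem : pδ₁ ∈ Γ)
    (hpδ₁_proj : ∀ g ∈ Γ,
      (∫ x, ((∫ y, δ (x, y) ∂μ) - pδ₁ x) * g x ∂μ) = 0)
    -- pδ₂ = Π_Γ δ₂ where δ₂(y) = E[δ(X_i,X_j) | X_j = y] = ∫ δ(x,y) μ(dx)
    (pδ₂ : 𝒳 → ℝ) (hpδ₂_mem : pδ₂ ∈ Γ)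
    (hpδ₂_proj : ∀ g ∈ Γ,
      (∫ y, ((∫ x, δ (x, y) ∂μ) - pδ₂ y) * g y ∂μ) = 0) :
    -- A = pδ₁(X_i) + pδ₂(X_j) − E[δ] is the orthogonal projection of δ onto S
    (∃ ν ∈ Γ, ∃ w ∈ Γ, (fun p : 𝒳 × 𝒳 =>
        pδ₁ p.1 + pδ₂ p.2 - ∫ q, δ q ∂(μ.prod μ)) = fun p : 𝒳 × 𝒳 => ν p.1 + w p.2)
    ∧ (∀ ν ∈ Γ, ∀ w ∈ Γ,
        (∫ p : 𝒳 × 𝒳,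
          (δ p - (pδ₁ p.1 + pδ₂ p.2 - ∫ q, δ q ∂(μ.prod μ))) * (ν p.1 + w p.2)
          ∂(μ.prod μ)) = 0) := by
  set C := ∫ q, δ q ∂(μ.prod μ)
  have hδ := hδ_L2.integrable one_le_two
  have hΓ_int : ∀ f ∈ Γ, Integrable f μ := fun f hf => (hΓ_L2 f hf).integrable one_le_two
  have hmean₁ : ∫ x, pδ₁ x ∂μ = C := by
    rw [integral_eq_of_integral_sub_mul_one_eq_zero hδ.integral_prod_left
      (hΓ_int _ hpδ₁_mem) (hpδ₁_proj _ (hΓ_const 1)), ← integral_prod _ hδ]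
  have hmean₂ : ∫ y, pδ₂ y ∂μ = C := by
    rw [integral_eq_of_integral_sub_mul_one_eq_zero hδ.integral_prod_right
      (hΓ_int _ hpδ₂_mem) (hpδ₂_proj _ (hΓ_const 1)), ← integral_prod_symm _ hδ]
  refine ⟨⟨fun x => pδ₁ x + -C, hΓ_add _ hpδ₁_mem _ (hΓ_const _), pδ₂, hpδ₂_mem, ?_⟩, ?_⟩
  · funext p
    ring
  intro ν hν w hw
  have hres : MemLp (fun p : 𝒳 × 𝒳 => δ p - (pδ₁ p.1 + pδ₂ p.2 - C)) 2 (μ.prod μ) :=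
    hδ_L2.sub ((((hΓ_L2 _ hpδ₁_mem).comp_fst μ).add ((hΓ_L2 _ hpδ₂_mem).comp_snd μ)).sub
      (memLp_const C))
  have hν_int : Integrable (fun p => (δ p - (pδ₁ p.1 + pδ₂ p.2 - C)) * ν p.1) (μ.prod μ) :=
    hres.integrable_mul ((hΓ_L2 _ hν).comp_fst μ)
  have hw_int : Integrable (fun p => (δ p - (pδ₁ p.1 + pδ₂ p.2 - C)) * w p.2) (μ.prod μ) :=
    hres.integrable_mul ((hΓ_L2 _ hw).comp_snd μ)
  simp only [mul_add]
  rw [integral_add hν_int hw_int, integral_prod_mul_fst hν_int, integral_prod_mul_snd hw_int]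
  have h₁ := ae_integral_sub_add_sub_left hδ pδ₁ (hΓ_int _ hpδ₂_mem) hmean₂
  have h₂ := ae_integral_sub_add_sub_right hδ (hΓ_int _ hpδ₁_mem) pδ₂ hmean₁
  rw [integral_congr_ae (h₁.mono fun x hx => congrArg (· * ν x) hx),
    integral_congr_ae (h₂.mono fun y hy => congrArg (· * w y) hy), hpδ₁_proj ν hν,
    hpδ₂_proj w hw, add_zero]

theorem proj_onto_sum_subspace_eq_sum_of_marginal_projections
    {𝒳 : Type*} [MeasurableSpace 𝒳]
    (μ : Measure 𝒳) [IsProbabilityMeasure μ]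
    (Γ : Set (𝒳 → ℝ))
    (hΓ_const : ∀ c : ℝ, (fun _ => c) ∈ Γ)
    (hΓ_add : ∀ f ∈ Γ, ∀ g ∈ Γ, (fun x => f x + g x) ∈ Γ)
    (hΓ_smul : ∀ (c : ℝ), ∀ f ∈ Γ, (fun x => c * f x) ∈ Γ)
    (hΓ_L2 : ∀ f ∈ Γ, MemLp f 2 μ)
    (δ : 𝒳 × 𝒳 → ℝ)
    (hδ_L2 : MemLp δ 2 (μ.prod μ))
    -- pδ₁ = Π_Γ δ₁ where δ₁(x) = E[δ(X_i,X_j) | X_i = x] = ∫ δ(x,y) μ(dy)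
    (pδ₁ : 𝒳 → ℝ) (hpδ₁_mem : pδ₁ ∈ Γ)
    (hpδ₁_proj : ∀ g ∈ Γ,
      (∫ x, ((∫ y, δ (x, y) ∂μ) - pδ₁ x) * g x ∂μ) = 0)
    -- pδ₂ = Π_Γ δ₂ where δ₂(y) = E[δ(X_i,X_j) | X_j = y] = ∫ δ(x,y) μ(dx)
    (pδ₂ : 𝒳 → ℝ) (hpδ₂_mem : pδ₂ ∈ Γ)
    (hpδ₂_proj : ∀ g ∈ Γ,
      (∫ y, ((∫ x, δ (x, y) ∂μ) - pδ₂ y) * g y ∂μ) = 0) :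
    -- A = pδ₁(X_i) + pδ₂(X_j) − E[δ] is the orthogonal projection of δ onto S
    (∃ ν ∈ Γ, ∃ w ∈ Γ, (fun p : 𝒳 × 𝒳 =>
        pδ₁ p.1 + pδ₂ p.2 - ∫ q, δ q ∂(μ.prod μ)) = fun p : 𝒳 × 𝒳 => ν p.1 + w p.2)
    ∧ (∀ ν ∈ Γ, ∀ w ∈ Γ,
        (∫ p : 𝒳 × 𝒳,
          (δ p - (pδ₁ p.1 + pδ₂ p.2 - ∫ q, δ q ∂(μ.prod μ))) * (ν p.1 + w p.2)
          ∂(μ.prod μ)) = 0) :=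
  proj_onto_sum_subspace_eq_sum_of_marginal_projections_general μ Γ hΓ_const hΓ_add hΓ_L2 δ hδ_L2
    pδ₁ hpδ₁_mem hpδ₁_proj pδ₂ hpδ₂_mem hpδ₂_proj
end

section
/- Let W = (Y,X) have law F₀ with Y real and square-integrable, let Γ be a closed linear subspace of L²(μ) (μ the law of X) containing constants, and let γ₀ ∈ Γ satisfy E[ν(X)(Y − γ₀(X))] = 0 for all ν ∈ Γ. Let α₀₁, α₀₂ ∈ Γ, let c₁, c₂ ∈ ℝ, define φ(w_i,w_j) = c₁α₀₁(x_i)(y_i − γ₀(x_i)) + c₂α₀₂(x_j)(y_j − γ₀(x_j)) and its symmetrization φ*(w_i,w_j) = (1/2)(φ(w_i,w_j) + φ(w_j,w_i)). Then the first projection w ↦ ∫ φ*(w,w') F₀(dw') equals (1/2)[c₁α₀₁(x) + c₂α₀₂(x)](y − γ₀(x)). In particular, if c₁α₀₁ + c₂α₀₂ = 0 μ-almost everywhere, then the first projection of φ* vanishes F₀-almost surely (no first-step estimation effect). -/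
/-!
The kernel φ is additive, so its symmetrization is `φ*(w, w') = ½ (g w + g w')` with
`g (y, x) = (c₁ α₀₁ x + c₂ α₀₂ x) (y - γ₀ x)`. Integrating out `w'` leaves `½ g w + ½ E[g]`,
and `E[g] = 0` by the orthogonality condition applied to `ν = c₁ α₀₁ + c₂ α₀₂ ∈ Γ`.
-/

open MeasureTheory

section ProjectionOfSymmetrizedKernel

variable {α : Type*} [MeasurableSpace α] {μ : Measure α}

theorem integral_half_mul_add_eq [IsProbabilityMeasure μ] {g : α → ℝ} (hg : Integrable g μ)
    (w : α) : ∫ w', (1 / 2) * (g w + g w') ∂μ = (1 / 2) * (g w + ∫ w', g w' ∂μ) := by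
  rw [integral_const_mul, integral_add (integrable_const _) hg, integral_const, probReal_univ,
    one_smul]

theorem integral_half_mul_add_eq_half_of_integral_eq_zero [IsProbabilityMeasure μ]
    {g : α → ℝ} (hg : Integrable g μ) (hg_zero : ∫ w', g w' ∂μ = 0) (w : α) :
    ∫ w', (1 / 2) * (g w + g w') ∂μ = (1 / 2) * g w := by
  rw [integral_half_mul_add_eq hg, hg_zero, add_zero]

end ProjectionOfSymmetrizedKernel

section WeightedResidual

variable {𝒳 : Type*} [MeasurableSpace 𝒳]

def weightedResidual (γ ν : 𝒳 → ℝ) (w : ℝ × 𝒳) : ℝ := ν w.2 * (w.1 - γ w.2)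

theorem integrable_weightedResidual {F : Measure (ℝ × 𝒳)} {γ ν : 𝒳 → ℝ}
    (hY : MemLp (fun w : ℝ × 𝒳 => w.1) 2 F) (hγ : MemLp (fun w : ℝ × 𝒳 => γ w.2) 2 F)
    (hν : MemLp (fun w : ℝ × 𝒳 => ν w.2) 2 F) :
    Integrable (weightedResidual γ ν) F :=
  hν.integrable_mul (hY.sub hγ)

end WeightedResidual

theorem first_projection_of_symmetrized_UFSIF_general
    {𝒳 : Type*} [MeasurableSpace 𝒳]
    (F₀ : Measure (ℝ × 𝒳)) [IsProbabilityMeasure F₀]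
    (Γ : Set (𝒳 → ℝ))
    (hΓ_add : ∀ f ∈ Γ, ∀ g ∈ Γ, (fun x => f x + g x) ∈ Γ)
    (hΓ_smul : ∀ (c : ℝ), ∀ f ∈ Γ, (fun x => c * f x) ∈ Γ)
    (hΓ_L2 : ∀ f ∈ Γ, MemLp (fun w : ℝ × 𝒳 => f w.2) 2 F₀)
    (hY_L2 : MemLp (fun w : ℝ × 𝒳 => w.1) 2 F₀)
    (γ₀ α₀₁ α₀₂ : 𝒳 → ℝ)
    (hγ₀ : γ₀ ∈ Γ) (hα₀₁ : α₀₁ ∈ Γ) (hα₀₂ : α₀₂ ∈ Γ)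
    (horth : ∀ ν ∈ Γ, (∫ w : ℝ × 𝒳, ν w.2 * (w.1 - γ₀ w.2) ∂F₀) = 0)
    (c₁ c₂ : ℝ)
    (φ φstar : (ℝ × 𝒳) → (ℝ × 𝒳) → ℝ)
    (hφ : ∀ w w' : ℝ × 𝒳,
      φ w w' = c₁ * α₀₁ w.2 * (w.1 - γ₀ w.2) + c₂ * α₀₂ w'.2 * (w'.1 - γ₀ w'.2))
    (hφstar : ∀ w w' : ℝ × 𝒳, φstar w w' = (1/2) * (φ w w' + φ w' w)) :
    (∀ w : ℝ × 𝒳,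
        (∫ w', φstar w w' ∂F₀)
          = (1/2) * (c₁ * α₀₁ w.2 + c₂ * α₀₂ w.2) * (w.1 - γ₀ w.2))
    ∧ ((∀ᵐ w ∂F₀, c₁ * α₀₁ w.2 + c₂ * α₀₂ w.2 = 0) →
        (∀ᵐ w ∂F₀, (∫ w', φstar w w' ∂F₀) = 0)) := by
  set ν : 𝒳 → ℝ := fun x => c₁ * α₀₁ x + c₂ * α₀₂ x
  have hν : ν ∈ Γ := hΓ_add _ (hΓ_smul c₁ _ hα₀₁) _ (hΓ_smul c₂ _ hα₀₂)
  have hg : Integrable (weightedResidual γ₀ ν) F₀ :=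
    integrable_weightedResidual hY_L2 (hΓ_L2 _ hγ₀) (hΓ_L2 _ hν)
  have hφstar_eq : ∀ w w', φstar w w' =
      (1 / 2) * (weightedResidual γ₀ ν w + weightedResidual γ₀ ν w') := by
    intro w w'
    simp only [hφstar, hφ, weightedResidual, ν]
    ring
  have hprojection : ∀ w : ℝ × 𝒳, (∫ w', φstar w w' ∂F₀)
      = (1/2) * (c₁ * α₀₁ w.2 + c₂ * α₀₂ w.2) * (w.1 - γ₀ w.2) := by
    intro w
    simp only [hφstar_eq]
    rw [integral_half_mul_add_eq_half_of_integral_eq_zero hg (horth ν hν), weightedResidual,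
      mul_assoc]
  refine ⟨hprojection, fun hvanish => ?_⟩
  filter_upwards [hvanish] with w hw
  rw [hprojection w, hw, mul_zero, zero_mul]

theorem first_projection_of_symmetrized_UFSIF
    {𝒳 : Type*} [MeasurableSpace 𝒳]
    (F₀ : Measure (ℝ × 𝒳)) [IsProbabilityMeasure F₀]
    (Γ : Set (𝒳 → ℝ))
    (hΓ_const : ∀ c : ℝ, (fun _ => c) ∈ Γ)
    (hΓ_add : ∀ f ∈ Γ, ∀ g ∈ Γ, (fun x => f x + g x) ∈ Γ)
    (hΓ_smul : ∀ (c : ℝ), ∀ f ∈ Γ, (fun x => c * f x) ∈ Γ)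
    (hΓ_L2 : ∀ f ∈ Γ, MemLp (fun w : ℝ × 𝒳 => f w.2) 2 F₀)
    (hY_L2 : MemLp (fun w : ℝ × 𝒳 => w.1) 2 F₀)
    (γ₀ α₀₁ α₀₂ : 𝒳 → ℝ)
    (hγ₀ : γ₀ ∈ Γ) (hα₀₁ : α₀₁ ∈ Γ) (hα₀₂ : α₀₂ ∈ Γ)
    (horth : ∀ ν ∈ Γ, (∫ w : ℝ × 𝒳, ν w.2 * (w.1 - γ₀ w.2) ∂F₀) = 0)
    (c₁ c₂ : ℝ)
    (φ φstar : (ℝ × 𝒳) → (ℝ × 𝒳) → ℝ)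
    (hφ : ∀ w w' : ℝ × 𝒳,
      φ w w' = c₁ * α₀₁ w.2 * (w.1 - γ₀ w.2) + c₂ * α₀₂ w'.2 * (w'.1 - γ₀ w'.2))
    (hφstar : ∀ w w' : ℝ × 𝒳, φstar w w' = (1/2) * (φ w w' + φ w' w)) :
    (∀ w : ℝ × 𝒳,
        (∫ w', φstar w w' ∂F₀)
          = (1/2) * (c₁ * α₀₁ w.2 + c₂ * α₀₂ w.2) * (w.1 - γ₀ w.2))
    ∧ ((∀ᵐ w ∂F₀, c₁ * α₀₁ w.2 + c₂ * α₀₂ w.2 = 0) →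
        (∀ᵐ w ∂F₀, (∫ w', φstar w w' ∂F₀) = 0)) :=
  first_projection_of_symmetrized_UFSIF_general F₀ Γ hΓ_add hΓ_smul hΓ_L2 hY_L2 γ₀ α₀₁ α₀₂ hγ₀ hα₀₁
    hα₀₂ horth c₁ c₂ φ φstar hφ hφstar
end

section
/- Let Δ₀ be an integrable real random variable with P(Δ₀ = 0) = 0, and let v be a real random variable on the same probability space with |v| ≤ C almost surely for some constant C. Then lim_{t→0⁺} t⁻¹ ( E[|Δ₀ + t v|] − E[|Δ₀|] ) = E[sgn(Δ₀) v]. -/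
/-!
For `a ≠ 0` the map `t ↦ |a + t b|` is differentiable at `0` with derivative `sign a · b`, and it
is `|b|`-Lipschitz in `t`. Since `Δ₀ ≠ 0` almost surely and `|v|` is integrable, differentiation
under the integral sign (dominated convergence for the difference quotients) shows that
`t ↦ E|Δ₀ + t v|` is even differentiable at `0` with derivative `E[sign Δ₀ · v]`; the claim is its
right-hand difference quotient.
-/

open MeasureTheory Filter

theorem Real.measurable_sign : Measurable Real.sign :=
  Measurable.ite measurableSet_Iio measurable_const
    (Measurable.ite measurableSet_Ioi measurable_const measurable_const)

theorem Real.sign_eq_coe_sign (x : ℝ) : Real.sign x = (SignType.sign x : ℝ) := by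
  rcases lt_trichotomy x 0 with hx | rfl | hx
  · simp [Real.sign_of_neg hx, _root_.sign_neg hx]
  · simp [Real.sign_zero]
  · simp [Real.sign_of_pos hx, sign_pos hx]

theorem hasDerivAt_abs_add_mul {a : ℝ} (ha : a ≠ 0) (b : ℝ) :
    HasDerivAt (fun t : ℝ => |a + t * b|) (Real.sign a * b) 0 := by
  have hline : HasDerivAt (fun t : ℝ => a + t * b) b 0 := by
    simpa using ((hasDerivAt_id (0 : ℝ)).mul_const b).const_add a
  rw [Real.sign_eq_coe_sign]
  exact (hasDerivAt_abs ha).comp_of_eq (0 : ℝ) hline (by simp)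

theorem lipschitzWith_abs_add_mul (a b : ℝ) :
    LipschitzWith (Real.nnabs b) (fun t : ℝ => |a + t * b|) :=
  LipschitzWith.of_dist_le_mul fun s t => by
    rw [Real.coe_nnabs, Real.dist_eq, Real.dist_eq]
    calc |(|a + s * b| - |a + t * b|)| ≤ |(a + s * b) - (a + t * b)| :=
          abs_abs_sub_abs_le_abs_sub _ _
      _ = |b| * |s - t| := by rw [← abs_mul]; ring_nf

theorem hasDerivAt_integral_abs_add_mul {Ω : Type*} [MeasurableSpace Ω] {μ : Measure Ω}
    {f g : Ω → ℝ} (hf : Integrable f μ) (hg : Integrable g μ) (hf₀ : ∀ᵐ ω ∂μ, f ω ≠ 0) :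
    HasDerivAt (fun t : ℝ => ∫ ω, |f ω + t * g ω| ∂μ) (∫ ω, Real.sign (f ω) * g ω ∂μ) 0 :=
  (hasDerivAt_integral_of_dominated_loc_of_lip (bound := g) univ_mem
    (Eventually.of_forall fun t => (hf.add (hg.const_mul t)).abs.aestronglyMeasurable)
    (by simpa using hf.abs)
    ((Real.measurable_sign.comp_aemeasurable hf.aemeasurable).mul
      hg.aemeasurable).aestronglyMeasurable
    (Eventually.of_forall fun ω => (lipschitzWith_abs_add_mul (f ω) (g ω)).lipschitzOnWith)
    hg
    (hf₀.mono fun ω hω => hasDerivAt_abs_add_mul hω (g ω))).2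

theorem gateaux_derivative_of_expected_abs
    {Ω : Type*} [MeasurableSpace Ω] (P : Measure Ω) [IsProbabilityMeasure P]
    (Δ₀ v : Ω → ℝ) (C : ℝ)
    (hΔint : Integrable Δ₀ P)
    (hvmeas : AEStronglyMeasurable v P)
    (hvbdd : ∀ᵐ ω ∂P, |v ω| ≤ C)
    (hzero : P {ω | Δ₀ ω = 0} = 0) :
    Tendsto
      (fun t : ℝ => t⁻¹ * ((∫ ω, |Δ₀ ω + t * v ω| ∂P) - ∫ ω, |Δ₀ ω| ∂P))
      (nhdsWithin 0 (Set.Ioi 0))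
      (nhds (∫ ω, Real.sign (Δ₀ ω) * v ω ∂P)) := by
  have hvint : Integrable v P := (integrable_const C).mono' hvmeas hvbdd
  have hΔne : ∀ᵐ ω ∂P, Δ₀ ω ≠ 0 := measure_eq_zero_iff_ae_notMem.1 hzero
  simpa using (hasDerivAt_integral_abs_add_mul hΔint hvint hΔne).tendsto_slope_zero_right
end

section
/- Let (W_i)_{i≥1} be i.i.d. with law F₀ and let ψ : 𝒲×𝒲 → ℝᵏ be a measurable symmetric kernel with E[ψ(W₁,W₂)] = 0 and E[|ψ(W₁,W₂)|²] < ∞, written as ψ = g + φ for measurable symmetric kernels g and φ. For each n, let (ĝ_{ij})_{i≠j≤n} and (φ̂_{ij})_{i≠j≤n} be arrays of ℝᵏ-valued random variables, and set ψ̂_{ij} = ĝ_{ij} + φ̂_{ij}, ĝ_{−i} = (n−1)⁻¹Σ_{j≠i}ĝ_{ij}, g_{−i} = (n−1)⁻¹Σ_{j≠i}g(W_i,W_j), and analogously φ̂_{−i}, φ_{−i}. If n⁻¹Σ_{i=1}^n |ĝ_{−i} − g_{−i}|² →p 0 and n⁻¹Σ_{i=1}^n |φ̂_{−i} − φ_{−i}|²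 →p 0, then Σ̂_n = (4/(n(n−1)²)) Σ_{i=1}^n (Σ_{j≠i} ψ̂_{ij})(Σ_{j≠i} ψ̂_{ij})ᵀ →p Σ = 4·Var(E[ψ(W₁,W₂) | W₁]). -/
/-!
Write `h(w) = ∫ ψ(w, w') dF₀(w')` and `ψ̂₋ᵢ = (n - 1)⁻¹ ∑_{j ≠ i} ψ̂ᵢⱼ`, so that
`Σ̂ₙ = 4 n⁻¹ ∑ᵢ ψ̂₋ᵢ ψ̂₋ᵢᵀ`. As `E h(W₁) = 0`, the law of large numbers gives
`4 n⁻¹ ∑ᵢ h(Wᵢ) h(Wᵢ)ᵀ → 4 E[h(W₁) h(W₁)ᵀ] = Σ`. By Cauchy–Schwarz, the entries of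
`n⁻¹ ∑ᵢ ψ̂₋ᵢ ψ̂₋ᵢᵀ` and `n⁻¹ ∑ᵢ h(Wᵢ) h(Wᵢ)ᵀ` differ by at most `2 √(Hₙ Dₙ) + Dₙ`, where
`Hₙ = n⁻¹ ∑ᵢ |h(Wᵢ)|²` converges and `Dₙ = n⁻¹ ∑ᵢ |ψ̂₋ᵢ - h(Wᵢ)|²` is at most three times the sum
of the two assumed leave-one-out errors and of `Rₙ = n⁻¹ ∑ᵢ |ψ₋ᵢ - h(Wᵢ)|²`. Finally
`E Rₙ = E |ψ(W₁, W₂) - h(W₁)|² / (n - 1) → 0`: for fixed `i` the terms `ψ(Wᵢ, Wⱼ) - h(Wᵢ)`,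
`j ≠ i`, are orthogonal in `L²` because the kernel `ψ(w, ·) - h(w)` is centred under `F₀`.

The estimated arrays need not be measurable, so convergence in measure is only ever handled
through monotonicity and subadditivity of the outer measure.
-/

open MeasureTheory ProbabilityTheory Filter Topology
open scoped Finset

noncomputable def sampleMean (n : ℕ) (x : ℕ → ℝ) : ℝ := (n : ℝ)⁻¹ * ∑ i ∈ Finset.range n, x i

theorem sampleMean_nonneg {n : ℕ} {x : ℕ → ℝ} (hx : ∀ i, 0 ≤ x i) : 0 ≤ sampleMean n x :=
  mul_nonneg (inv_nonneg.mpr n.cast_nonneg) (Finset.sum_nonneg fun i _ => hx i)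

section Inequalities

theorem norm_add_add_sq_le {V : Type*} [SeminormedAddCommGroup V] (x y z : V) :
    ‖x + y + z‖ ^ 2 ≤ 3 * (‖x‖ ^ 2 + ‖y‖ ^ 2 + ‖z‖ ^ 2) := by
  have h := norm_add₃_le (a := x) (b := y) (c := z)
  have h0 := norm_nonneg (x + y + z)
  nlinarith [sq_nonneg (‖x‖ - ‖y‖), sq_nonneg (‖y‖ - ‖z‖), sq_nonneg (‖x‖ - ‖z‖)]

theorem norm_inv_card_smul_sum_sub_sq {κ V : Type*} [SeminormedAddCommGroup V]
    [NormedSpace ℝ V] {s : Finset κ} (hs : s.Nonempty) (x : κ → V) (y : V) :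
    ‖(#s : ℝ)⁻¹ • ∑ j ∈ s, x j - y‖ ^ 2 = (#s : ℝ)⁻¹ ^ 2 * ‖∑ j ∈ s, (x j - y)‖ ^ 2 := by
  have hs0 : (#s : ℝ) ≠ 0 := Nat.cast_ne_zero.mpr hs.card_pos.ne'
  have hcentre : (#s : ℝ)⁻¹ • ∑ j ∈ s, x j - y = (#s : ℝ)⁻¹ • ∑ j ∈ s, (x j - y) := by
    rw [Finset.sum_sub_distrib, Finset.sum_const, ← Nat.cast_smul_eq_nsmul ℝ, smul_sub, smul_smul,
      inv_mul_cancel₀ hs0, one_smul]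
  rw [hcentre, norm_smul, mul_pow, Real.norm_of_nonneg (by positivity)]

theorem sampleMean_norm_sq_smul_add_sub_le {E : Type*} [SeminormedAddCommGroup E] [Module ℝ E]
    (n : ℕ) (c : ℝ) (x y x' y' u : ℕ → E) :
    sampleMean n (fun i => ‖c • (x i + y i) - u i‖ ^ 2)
      ≤ 3 * (sampleMean n (fun i => ‖c • x i - c • x' i‖ ^ 2)
        + sampleMean n (fun i => ‖c • y i - c • y' i‖ ^ 2)
        + sampleMean n (fun i => ‖c • (x' i + y' i) - u i‖ ^ 2)) := by
  unfold sampleMean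
  rw [← mul_add, ← mul_add, mul_left_comm, ← Finset.sum_add_distrib, ← Finset.sum_add_distrib]
  refine mul_le_mul_of_nonneg_left ?_ (inv_nonneg.mpr n.cast_nonneg)
  rw [Finset.mul_sum]
  gcongr with i
  have hsplit : c • (x i + y i) - u i
      = (c • x i - c • x' i) + (c • y i - c • y' i) + (c • (x' i + y' i) - u i) := by
    simp only [smul_add]
    abel
  simpa only [hsplit] using norm_add_add_sq_le _ _ _

variable {ι : Type*} [Fintype ι]

theorem abs_apply_mul_apply_sub_le (x y : EuclideanSpace ℝ ι) (a b : ι) :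
    |x a * x b - y a * y b| ≤ 2 * ‖y‖ * ‖x - y‖ + ‖x - y‖ ^ 2 := by
  have h : ∀ (z : EuclideanSpace ℝ ι) c, |z c| ≤ ‖z‖ := fun z c => PiLp.norm_apply_le z c
  have hxa : x a = y a + (x - y) a := by simp
  have hxb : x b = y b + (x - y) b := by simp
  rw [hxa, hxb]
  calc |(y a + (x - y) a) * (y b + (x - y) b) - y a * y b|
      = |y a * (x - y) b + (x - y) a * y b + (x - y) a * (x - y) b| := by ring_nf
    _ ≤ |y a| * |(x - y) b| + |(x - y) a| * |y b| + |(x - y) a| * |(x - y) b| := by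
        simp only [← abs_mul]; exact abs_add_three _ _ _
    _ ≤ ‖y‖ * ‖x - y‖ + ‖x - y‖ * ‖y‖ + ‖x - y‖ * ‖x - y‖ := by
        gcongr <;> apply h
    _ = 2 * ‖y‖ * ‖x - y‖ + ‖x - y‖ ^ 2 := by ring

theorem abs_sum_apply_mul_apply_sub_le {κ : Type*} (s : Finset κ) {c : ℝ} (hc : 0 ≤ c)
    (p u : κ → EuclideanSpace ℝ ι) (a b : ι) :
    |c * ∑ i ∈ s, p i a * p i b - c * ∑ i ∈ s, u i a * u i b|
      ≤ 2 * √((c * ∑ i ∈ s, ‖u i‖ ^ 2) * (c * ∑ i ∈ s, ‖p i - u i‖ ^ 2))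
        + c * ∑ i ∈ s, ‖p i - u i‖ ^ 2 := by
  have hcs : ∑ i ∈ s, ‖u i‖ * ‖p i - u i‖
      ≤ √(∑ i ∈ s, ‖u i‖ ^ 2) * √(∑ i ∈ s, ‖p i - u i‖ ^ 2) :=
    Real.sum_mul_le_sqrt_mul_sqrt _ _ _
  have hsqrt : √((c * ∑ i ∈ s, ‖u i‖ ^ 2) * (c * ∑ i ∈ s, ‖p i - u i‖ ^ 2))
      = c * (√(∑ i ∈ s, ‖u i‖ ^ 2) * √(∑ i ∈ s, ‖p i - u i‖ ^ 2)) := by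
    rw [mul_mul_mul_comm, Real.sqrt_mul (mul_self_nonneg c), Real.sqrt_mul_self hc,
      Real.sqrt_mul (Finset.sum_nonneg fun i _ => sq_nonneg _)]
  calc |c * ∑ i ∈ s, p i a * p i b - c * ∑ i ∈ s, u i a * u i b|
      = c * |∑ i ∈ s, (p i a * p i b - u i a * u i b)| := by
        rw [← mul_sub, ← Finset.sum_sub_distrib, abs_mul, abs_of_nonneg hc]
    _ ≤ c * ∑ i ∈ s, (2 * ‖u i‖ * ‖p i - u i‖ + ‖p i - u i‖ ^ 2) := by
        gcongr
        exact (Finset.abs_sum_le_sum_abs _ _).trans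
          (Finset.sum_le_sum fun i _ => abs_apply_mul_apply_sub_le _ _ _ _)
    _ = 2 * (c * ∑ i ∈ s, ‖u i‖ * ‖p i - u i‖) + c * ∑ i ∈ s, ‖p i - u i‖ ^ 2 := by
        rw [Finset.sum_add_distrib, mul_add]
        simp only [Finset.mul_sum]
        congr 1
        exact Finset.sum_congr rfl fun i _ => by ring
    _ ≤ _ := by rw [hsqrt]; gcongr

theorem abs_varianceEstimator_sub_le {n : ℕ} (hn : 2 ≤ n) (a b : ι)
    (S u : ℕ → EuclideanSpace ℝ ι) :
    |4 / ((n : ℝ) * ((n : ℝ) - 1) ^ 2) * ∑ i ∈ Finset.range n, S i a * S i b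
        - 4 * sampleMean n (fun i => u i a * u i b)|
      ≤ 8 * (√(sampleMean n (fun i => ‖u i‖ ^ 2)
            * sampleMean n (fun i => ‖((n : ℝ) - 1)⁻¹ • S i - u i‖ ^ 2))
          + sampleMean n (fun i => ‖((n : ℝ) - 1)⁻¹ • S i - u i‖ ^ 2)) := by
  have hm : (n : ℝ) - 1 ≠ 0 := by
    have : (2 : ℝ) ≤ n := by exact_mod_cast hn
    linarith
  have hX : 4 / ((n : ℝ) * ((n : ℝ) - 1) ^ 2) * ∑ i ∈ Finset.range n, S i a * S i b
      = 4 * sampleMean n (fun i => (((n : ℝ) - 1)⁻¹ • S i) a * (((n : ℝ) - 1)⁻¹ • S i) b) := by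
    simp only [sampleMean, PiLp.smul_apply, smul_eq_mul, Finset.mul_sum]
    refine Finset.sum_congr rfl fun i _ => ?_
    field_simp
  have hbound := abs_sum_apply_mul_apply_sub_le (Finset.range n) (inv_nonneg.mpr n.cast_nonneg)
    (fun i => ((n : ℝ) - 1)⁻¹ • S i) u a b
  have hD := sampleMean_nonneg (n := n) (fun i => sq_nonneg ‖((n : ℝ) - 1)⁻¹ • S i - u i‖)
  rw [hX, ← mul_sub, abs_mul, abs_of_pos four_pos]
  unfold sampleMean at hD ⊢
  linarith

end Inequalities

namespace MeasureTheory

section Integrals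

variable {α β E : Type*} [MeasurableSpace α] [MeasurableSpace β] [NormedAddCommGroup E]

theorem MeasurePreserving.integral_comp_of_aestronglyMeasurable [NormedSpace ℝ E] {μ : Measure α}
    {ν : Measure β} {f : α → β} (hf : MeasurePreserving f μ ν) {g : β → E}
    (hg : AEStronglyMeasurable g ν) : ∫ x, g (f x) ∂μ = ∫ y, g y ∂ν := by
  rw [← hf.map_eq] at hg ⊢
  exact (integral_map hf.measurable.aemeasurable hg).symm

theorem MemLp.integrable_apply_mul_apply {ι : Type*} [Fintype ι] {μ : Measure α}
    {f : α → EuclideanSpace ℝ ι} (hf : MemLp f 2 μ) (a b : ι) :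
    Integrable (fun x => f x a * f x b) μ :=
  ((EuclideanSpace.proj (𝕜 := ℝ) a).comp_memLp' hf).integrable_mul
    ((EuclideanSpace.proj (𝕜 := ℝ) b).comp_memLp' hf)

variable [InnerProductSpace ℝ E]

theorem MemLp.integrable_inner {μ : Measure α} {f g : α → E} (hf : MemLp f 2 μ)
    (hg : MemLp g 2 μ) : Integrable (fun x => inner ℝ (f x) (g x)) μ :=
  (L2.integrable_inner (𝕜 := ℝ) (hf.toLp f) (hg.toLp g)).congr <| by
    filter_upwards [hf.coeFn_toLp, hg.coeFn_toLp] with x hfx hgx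
    rw [hfx, hgx]

variable [CompleteSpace E]

theorem MemLp.integral_prod_left {μ : Measure α} [IsFiniteMeasure μ] {ν : Measure β}
    [IsProbabilityMeasure ν] {f : α → β → E} (hf : MemLp (Function.uncurry f) 2 (μ.prod ν)) :
    MemLp (fun x => ∫ y, f x y ∂ν) 2 μ := by
  have hsq := (memLp_two_iff_integrable_sq_norm hf.1).mp hf
  have hm : AEStronglyMeasurable (fun x => ∫ y, f x y ∂ν) μ := hf.1.integral_prod_right'
  refine (memLp_two_iff_integrable_sq_norm hm).mpr
    (hsq.integral_prod_left.mono' (hm.norm.pow 2) ?_)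
  filter_upwards [(hf.integrable one_le_two).prod_right_ae, hsq.prod_right_ae] with x hx hx2
  rw [Real.norm_of_nonneg (sq_nonneg _)]
  exact ((convexOn_univ_norm.pow fun _ _ => norm_nonneg _) 2).map_integral_le
    (by fun_prop) isClosed_univ (Eventually.of_forall fun _ => Set.mem_univ _) hx hx2

end Integrals

section ConvergenceInMeasure

variable {α ι : Type*} [MeasurableSpace α] {μ : Measure α} {l : Filter ι}

theorem TendstoInMeasure.prodMk {E F : Type*} [PseudoEMetricSpace E] [PseudoEMetricSpace F]
    {f : ι → α → E} {g : ι → α → F} {f₀ : α → E} {g₀ : α → F}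
    (hf : TendstoInMeasure μ f l f₀) (hg : TendstoInMeasure μ g l g₀) :
    TendstoInMeasure μ (fun i x => (f i x, g i x)) l (fun x => (f₀ x, g₀ x)) := by
  intro ε hε
  have hunion : ∀ i, μ {x | ε ≤ edist (f i x, g i x) (f₀ x, g₀ x)}
      ≤ μ {x | ε ≤ edist (f i x) (f₀ x)} + μ {x | ε ≤ edist (g i x) (g₀ x)} := fun i =>
    (measure_mono fun x hx => by simpa [Prod.edist_eq, le_max_iff] using hx).trans
      (measure_union_le _ _)
  exact tendsto_of_tendsto_of_tendsto_of_le_of_le tendsto_const_nhds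
    (by simpa using (hf ε hε).add (hg ε hε)) (fun _ => zero_le) hunion

theorem TendstoInMeasure.comp_continuousAt {E F : Type*} [PseudoEMetricSpace E]
    [PseudoEMetricSpace F] {f : ι → α → E} {c : E} {φ : E → F}
    (hf : TendstoInMeasure μ f l (fun _ => c)) (hφ : ContinuousAt φ c) :
    TendstoInMeasure μ (fun i x => φ (f i x)) l (fun _ => φ c) := by
  intro ε hε
  obtain ⟨δ, hδ, hφδ⟩ := EMetric.continuousAt_iff.mp hφ ε hε
  refine tendsto_of_tendsto_of_tendsto_of_le_of_le tendsto_const_nhds (hf δ hδ)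
    (fun _ => zero_le) fun i => measure_mono fun x hx => ?_
  by_contra hlt
  exact (not_lt.mpr hx) (hφδ (not_le.mp hlt))

theorem tendstoInMeasure_of_abs_sub_le {X Z : ι → α → ℝ} {c : ℝ}
    (hZ : TendstoInMeasure μ Z l (fun _ => 0)) (hle : ∀ᶠ i in l, ∀ x, |X i x - c| ≤ Z i x) :
    TendstoInMeasure μ X l (fun _ => c) := by
  rw [tendstoInMeasure_iff_dist] at hZ ⊢
  intro ε hε
  refine tendsto_of_tendsto_of_tendsto_of_le_of_le' tendsto_const_nhds (hZ ε hε)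
    (Eventually.of_forall fun _ => zero_le) ?_
  filter_upwards [hle] with i hi
  exact measure_mono fun x (hx : ε ≤ |X i x - c|) =>
    (hx.trans (hi x)).trans ((le_abs_self _).trans_eq (Real.dist_0_eq_abs _).symm)

theorem tendstoInMeasure_of_abs_sub_le_sqrt_mul_add {X S H D : ι → α → ℝ} {c h : ℝ} (K : ℝ)
    (hS : TendstoInMeasure μ S l (fun _ => c)) (hH : TendstoInMeasure μ H l (fun _ => h))
    (hD : TendstoInMeasure μ D l (fun _ => 0))
    (hle : ∀ᶠ i in l, ∀ x, |X i x - S i x| ≤ K * (√(H i x * D i x) + D i x)) :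
    TendstoInMeasure μ X l (fun _ => c) := by
  have hZ := (hS.prodMk (hH.prodMk hD)).comp_continuousAt
    (φ := fun t : ℝ × ℝ × ℝ => |t.1 - c| + K * (√(t.2.1 * t.2.2) + t.2.2)) (by fun_prop)
  simp only [sub_self, abs_zero, mul_zero, Real.sqrt_zero, add_zero] at hZ
  refine tendstoInMeasure_of_abs_sub_le hZ ?_
  filter_upwards [hle] with i hi x
  linarith [abs_sub_le (X i x) (S i x) c, hi x]

theorem tendstoInMeasure_zero_of_integral_tendsto_zero [IsFiniteMeasure μ] {f : ι → α → ℝ}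
    (hf₀ : ∀ i x, 0 ≤ f i x) (hfi : ∀ᶠ i in l, Integrable (f i) μ)
    (hlim : Tendsto (fun i => ∫ x, f i x ∂μ) l (𝓝 0)) :
    TendstoInMeasure μ f l (fun _ => 0) := by
  rw [tendstoInMeasure_iff_measureReal_dist]
  intro ε hε
  refine tendsto_of_tendsto_of_tendsto_of_le_of_le' tendsto_const_nhds
    (by simpa using hlim.div_const ε) (Eventually.of_forall fun _ => measureReal_nonneg) ?_
  filter_upwards [hfi] with i hi
  rw [le_div_iff₀ hε, mul_comm]
  simpa [Real.dist_eq, abs_of_nonneg (hf₀ i _)] using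
    mul_meas_ge_le_integral_of_nonneg (Eventually.of_forall (hf₀ i)) hi ε

theorem tendstoInMeasure_sampleMean_norm_sq_smul_add_sub {E : Type*} [SeminormedAddCommGroup E]
    [Module ℝ E] {l : Filter ℕ} {c : ℕ → ℝ} {x y x' y' u : ℕ → α → ℕ → E}
    (hx : TendstoInMeasure μ
      (fun n ω => sampleMean n fun i => ‖c n • x n ω i - c n • x' n ω i‖ ^ 2) l (fun _ => 0))
    (hy : TendstoInMeasure μ
      (fun n ω => sampleMean n fun i => ‖c n • y n ω i - c n • y' n ω i‖ ^ 2) l (fun _ => 0))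
    (hu : TendstoInMeasure μ
      (fun n ω => sampleMean n fun i => ‖c n • (x' n ω i + y' n ω i) - u n ω i‖ ^ 2) l
      (fun _ => 0)) :
    TendstoInMeasure μ
      (fun n ω => sampleMean n fun i => ‖c n • (x n ω i + y n ω i) - u n ω i‖ ^ 2) l
      (fun _ => 0) := by
  have hsum := ((hx.prodMk hy).prodMk hu).comp_continuousAt
    (φ := fun t : (ℝ × ℝ) × ℝ => 3 * (t.1.1 + t.1.2 + t.2)) (by fun_prop)
  simp only [add_zero, mul_zero] at hsum
  refine tendstoInMeasure_of_abs_sub_le hsum (Eventually.of_forall fun n ω => ?_)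
  rw [sub_zero, abs_of_nonneg (sampleMean_nonneg fun i => sq_nonneg _)]
  exact sampleMean_norm_sq_smul_add_sub_le (E := E) _ _ _ _ _ _ _

end ConvergenceInMeasure

end MeasureTheory

section DegenerateKernel

variable {𝒲 E : Type*} [MeasurableSpace 𝒲] [NormedAddCommGroup E] [InnerProductSpace ℝ E]
  {F₀ : Measure 𝒲} [IsProbabilityMeasure F₀] {ξ : 𝒲 → 𝒲 → E}

theorem MeasureTheory.MemLp.integrable_inner_kernel_prod
    (hξ : MemLp (Function.uncurry ξ) 2 (F₀.prod F₀)) :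
    Integrable (fun p : 𝒲 × 𝒲 × 𝒲 => inner ℝ (ξ p.1 p.2.1) (ξ p.1 p.2.2))
      (F₀.prod (F₀.prod F₀)) :=
  MemLp.integrable_inner
    (hξ.comp_measurePreserving ((MeasurePreserving.id F₀).prod measurePreserving_fst))
    (hξ.comp_measurePreserving ((MeasurePreserving.id F₀).prod measurePreserving_snd))

variable [CompleteSpace E]

theorem MeasureTheory.MemLp.kernel_sub_integral (hξ : MemLp (Function.uncurry ξ) 2 (F₀.prod F₀)) :
    MemLp (Function.uncurry fun w v => ξ w v - ∫ v', ξ w v' ∂F₀) 2 (F₀.prod F₀) :=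
  hξ.sub (hξ.integral_prod_left.comp_measurePreserving measurePreserving_fst)

theorem ae_integral_kernel_sub_integral_eq_zero
    (hξ : Integrable (Function.uncurry ξ) (F₀.prod F₀)) :
    ∀ᵐ w ∂F₀, ∫ v, (ξ w v - ∫ v', ξ w v' ∂F₀) ∂F₀ = 0 := by
  filter_upwards [hξ.prod_right_ae] with w hw
  replace hw : Integrable (ξ w) F₀ := hw
  simp [integral_sub hw (integrable_const _)]

theorem integral_inner_degenerate_kernel_eq_zero
    (hξ : MemLp (Function.uncurry ξ) 2 (F₀.prod F₀)) (hdeg : ∀ᵐ w ∂F₀, ∫ v, ξ w v ∂F₀ = 0) :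
    ∫ p, inner ℝ (ξ p.1 p.2.1) (ξ p.1 p.2.2) ∂(F₀.prod (F₀.prod F₀)) = 0 := by
  have hint := hξ.integrable_inner_kernel_prod
  rw [integral_prod _ hint]
  refine integral_eq_zero_of_ae ?_
  filter_upwards [hdeg, hint.prod_right_ae, (hξ.integrable one_le_two).prod_right_ae]
    with w hw hintw hξw
  replace hξw : Integrable (ξ w) F₀ := hξw
  rw [Pi.zero_apply, integral_prod _ hintw]
  simp only [integral_inner hξw, hw, inner_zero_right, integral_zero]

end DegenerateKernel

section IID

variable {ι Ω 𝒲 E : Type*} [MeasurableSpace Ω] [MeasurableSpace 𝒲] {P : Measure Ω}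
  [IsProbabilityMeasure P] {F₀ : Measure 𝒲} {W : ι → Ω → 𝒲}

theorem measurePreserving_pair_of_iIndepFun (hW : ∀ i, Measurable (W i)) (hiid : iIndepFun W P)
    (hlaw : ∀ i, P.map (W i) = F₀) {i j : ι} (hij : i ≠ j) :
    MeasurePreserving (fun ω => (W i ω, W j ω)) P (F₀.prod F₀) :=
  ⟨(hW i).prodMk (hW j), by
    rw [(indepFun_iff_map_prod_eq_prod_map_map (hW i).aemeasurable (hW j).aemeasurable).mp
      (hiid.indepFun hij), hlaw i, hlaw j]⟩

theorem measurePreserving_triple_of_iIndepFun (hW : ∀ i, Measurable (W i))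
    (hiid : iIndepFun W P) (hlaw : ∀ i, P.map (W i) = F₀) {i j j' : ι} (hji : j ≠ i)
    (hj'i : j' ≠ i) (hjj' : j ≠ j') :
    MeasurePreserving (fun ω => (W i ω, W j ω, W j' ω)) P (F₀.prod (F₀.prod F₀)) :=
  ⟨(hW i).prodMk ((hW j).prodMk (hW j')), by
    rw [(indepFun_iff_map_prod_eq_prod_map_map (hW i).aemeasurable
      ((hW j).prodMk (hW j')).aemeasurable).mp (hiid.indepFun_prodMk hW j j' i hji hj'i).symm,
      hlaw i, (measurePreserving_pair_of_iIndepFun hW hiid hlaw hjj').map_eq]⟩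

variable [NormedAddCommGroup E] {ξ : 𝒲 → 𝒲 → E}

theorem memLp_kernel_comp (hW : ∀ i, Measurable (W i)) (hiid : iIndepFun W P)
    (hlaw : ∀ i, P.map (W i) = F₀) (hξ : MemLp (Function.uncurry ξ) 2 (F₀.prod F₀)) {i j : ι}
    (hij : i ≠ j) : MemLp (fun ω => ξ (W i ω) (W j ω)) 2 P :=
  hξ.comp_measurePreserving (measurePreserving_pair_of_iIndepFun hW hiid hlaw hij)

theorem memLp_sum_kernel_comp (hW : ∀ i, Measurable (W i)) (hiid : iIndepFun W P)
    (hlaw : ∀ i, P.map (W i) = F₀) (hξ : MemLp (Function.uncurry ξ) 2 (F₀.prod F₀)) {i : ι}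
    {s : Finset ι} (hi : i ∉ s) : MemLp (fun ω => ∑ j ∈ s, ξ (W i ω) (W j ω)) 2 P :=
  memLp_finsetSum s fun _ hj =>
    memLp_kernel_comp hW hiid hlaw hξ (ne_of_mem_of_not_mem hj hi).symm

variable [InnerProductSpace ℝ E] [CompleteSpace E] [IsProbabilityMeasure F₀]

theorem integral_inner_degenerate_kernel_comp [DecidableEq ι] (hW : ∀ i, Measurable (W i))
    (hiid : iIndepFun W P) (hlaw : ∀ i, P.map (W i) = F₀)
    (hξ : MemLp (Function.uncurry ξ) 2 (F₀.prod F₀)) (hdeg : ∀ᵐ w ∂F₀, ∫ v, ξ w v ∂F₀ = 0)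
    {i j j' : ι} (hji : j ≠ i) (hj'i : j' ≠ i) :
    ∫ ω, inner ℝ (ξ (W i ω) (W j ω)) (ξ (W i ω) (W j' ω)) ∂P
      = if j = j' then ∫ q, ‖ξ q.1 q.2‖ ^ 2 ∂(F₀.prod F₀) else 0 := by
  split_ifs with hjj'
  · subst hjj'
    simp_rw [real_inner_self_eq_norm_sq]
    exact (measurePreserving_pair_of_iIndepFun hW hiid hlaw hji.symm
      ).integral_comp_of_aestronglyMeasurable (g := fun q => ‖ξ q.1 q.2‖ ^ 2) (hξ.1.norm.pow 2)
  · rw [← integral_inner_degenerate_kernel_eq_zero hξ hdeg]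
    exact (measurePreserving_triple_of_iIndepFun hW hiid hlaw hji hj'i hjj'
      ).integral_comp_of_aestronglyMeasurable (g := fun p => inner ℝ (ξ p.1 p.2.1) (ξ p.1 p.2.2))
      hξ.integrable_inner_kernel_prod.1

theorem integral_norm_sq_sum_degenerate_kernel_comp (hW : ∀ i, Measurable (W i))
    (hiid : iIndepFun W P) (hlaw : ∀ i, P.map (W i) = F₀)
    (hξ : MemLp (Function.uncurry ξ) 2 (F₀.prod F₀)) (hdeg : ∀ᵐ w ∂F₀, ∫ v, ξ w v ∂F₀ = 0)
    {i : ι} {s : Finset ι} (hi : i ∉ s) :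
    ∫ ω, ‖∑ j ∈ s, ξ (W i ω) (W j ω)‖ ^ 2 ∂P = #s * ∫ q, ‖ξ q.1 q.2‖ ^ 2 ∂(F₀.prod F₀) := by
  classical
  have hmem : ∀ j ∈ s, MemLp (fun ω => ξ (W i ω) (W j ω)) 2 P := fun _ hj =>
    memLp_kernel_comp hW hiid hlaw hξ (ne_of_mem_of_not_mem hj hi).symm
  have hexpand : ∀ ω, ‖∑ j ∈ s, ξ (W i ω) (W j ω)‖ ^ 2
      = ∑ j ∈ s, ∑ j' ∈ s, inner ℝ (ξ (W i ω) (W j ω)) (ξ (W i ω) (W j' ω)) := fun ω => by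
    rw [← real_inner_self_eq_norm_sq, sum_inner]
    simp_rw [inner_sum]
  simp_rw [hexpand]
  rw [integral_finsetSum _ fun j hj => integrable_finsetSum _ fun j' hj' =>
    (hmem j hj).integrable_inner (hmem j' hj')]
  calc ∑ j ∈ s, ∫ ω, ∑ j' ∈ s, inner ℝ (ξ (W i ω) (W j ω)) (ξ (W i ω) (W j' ω)) ∂P
      = ∑ j ∈ s, ∑ j' ∈ s, if j = j' then ∫ q, ‖ξ q.1 q.2‖ ^ 2 ∂(F₀.prod F₀) else 0 := by
        refine Finset.sum_congr rfl fun j hj => ?_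
        rw [integral_finsetSum _ fun j' hj' => (hmem j hj).integrable_inner (hmem j' hj')]
        exact Finset.sum_congr rfl fun j' hj' => integral_inner_degenerate_kernel_comp hW hiid
          hlaw hξ hdeg (ne_of_mem_of_not_mem hj hi) (ne_of_mem_of_not_mem hj' hi)
    _ = #s * ∫ q, ‖ξ q.1 q.2‖ ^ 2 ∂(F₀.prod F₀) := by simp

theorem integrable_norm_sq_inv_card_smul_sum_kernel_comp_sub (hW : ∀ i, Measurable (W i))
    (hiid : iIndepFun W P) (hlaw : ∀ i, P.map (W i) = F₀)
    (hξ : MemLp (Function.uncurry ξ) 2 (F₀.prod F₀)) {i : ι} {s : Finset ι} (hi : i ∉ s)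
    (hs : s.Nonempty) :
    Integrable
      (fun ω => ‖(#s : ℝ)⁻¹ • ∑ j ∈ s, ξ (W i ω) (W j ω) - ∫ v, ξ (W i ω) v ∂F₀‖ ^ 2) P := by
  have h := memLp_sum_kernel_comp hW hiid hlaw hξ.kernel_sub_integral hi
  simpa only [norm_inv_card_smul_sum_sub_sq hs] using
    ((memLp_two_iff_integrable_sq_norm h.1).mp h).const_mul ((#s : ℝ)⁻¹ ^ 2)

theorem integral_norm_sq_inv_card_smul_sum_kernel_comp_sub (hW : ∀ i, Measurable (W i))
    (hiid : iIndepFun W P) (hlaw : ∀ i, P.map (W i) = F₀)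
    (hξ : MemLp (Function.uncurry ξ) 2 (F₀.prod F₀)) {i : ι} {s : Finset ι} (hi : i ∉ s)
    (hs : s.Nonempty) :
    ∫ ω, ‖(#s : ℝ)⁻¹ • ∑ j ∈ s, ξ (W i ω) (W j ω) - ∫ v, ξ (W i ω) v ∂F₀‖ ^ 2 ∂P
      = (∫ q, ‖ξ q.1 q.2 - ∫ v, ξ q.1 v ∂F₀‖ ^ 2 ∂(F₀.prod F₀)) / #s := by
  simp_rw [norm_inv_card_smul_sum_sub_sq hs]
  rw [integral_const_mul, integral_norm_sq_sum_degenerate_kernel_comp hW hiid hlaw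
    hξ.kernel_sub_integral (ae_integral_kernel_sub_integral_eq_zero (hξ.integrable one_le_two)) hi]
  field_simp

end IID

section SampleMeans

variable {Ω 𝒲 : Type*} [MeasurableSpace Ω] [MeasurableSpace 𝒲] {P : Measure Ω}
  [IsProbabilityMeasure P] {F₀ : Measure 𝒲} {W : ℕ → Ω → 𝒲}

theorem tendstoInMeasure_sampleMean_comp_of_iIndepFun (hW : ∀ i, Measurable (W i))
    (hiid : iIndepFun W P) (hlaw : ∀ i, P.map (W i) = F₀) {f : 𝒲 → ℝ} (hf : Measurable f)
    (hfi : Integrable f F₀) :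
    TendstoInMeasure P (fun n ω => sampleMean n fun i => f (W i ω)) atTop
      (fun _ => ∫ w, f w ∂F₀) := by
  have hW₀ : MeasurePreserving (W 0) P F₀ := ⟨hW 0, hlaw 0⟩
  have hslln := strong_law_ae_real (fun i ω => f (W i ω)) (hW₀.integrable_comp_of_integrable hfi)
    (fun i j hij => (hiid.indepFun hij).comp hf hf)
    (fun i => IdentDistrib.comp
      ⟨(hW i).aemeasurable, (hW 0).aemeasurable, by rw [hlaw i, hlaw 0]⟩ hf)
  rw [hW₀.integral_comp_of_aestronglyMeasurable hf.aestronglyMeasurable] at hslln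
  refine tendstoInMeasure_of_tendsto_ae (fun n => ?_) (hslln.mono fun ω hω => ?_)
  · exact ((Finset.measurable_sum _ fun i _ => hf.comp (hW i)).const_mul _).aestronglyMeasurable
  · simpa only [sampleMean, div_eq_inv_mul] using hω

theorem tendstoInMeasure_leaveOneOut_sub_integral {E : Type*} [NormedAddCommGroup E]
    [InnerProductSpace ℝ E] [CompleteSpace E] [IsProbabilityMeasure F₀]
    (hW : ∀ i, Measurable (W i)) (hiid : iIndepFun W P) (hlaw : ∀ i, P.map (W i) = F₀)
    {ψ : 𝒲 → 𝒲 → E} (hψ : MemLp (Function.uncurry ψ) 2 (F₀.prod F₀)) :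
    TendstoInMeasure P
      (fun n ω => sampleMean n fun i =>
        ‖((n : ℝ) - 1)⁻¹ • ∑ j ∈ (Finset.range n).erase i, ψ (W i ω) (W j ω)
          - ∫ w', ψ (W i ω) w' ∂F₀‖ ^ 2)
      atTop (fun _ => 0) := by
  have hcard : ∀ n i, i ∈ Finset.range n → (#((Finset.range n).erase i) : ℝ) = n - 1 :=
    fun n i hi => by
      rw [Finset.card_erase_of_mem hi, Finset.card_range,
        Nat.cast_pred (Nat.zero_lt_of_lt (Finset.mem_range.mp hi))]
  have hne : ∀ n i, 2 ≤ n → i ∈ Finset.range n → ((Finset.range n).erase i).Nonempty :=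
    fun n i hn hi => Finset.card_pos.mp <| by
      rw [Finset.card_erase_of_mem hi, Finset.card_range]
      omega
  have hint := fun n i hn hi => hcard n i hi ▸ integrable_norm_sq_inv_card_smul_sum_kernel_comp_sub
    hW hiid hlaw hψ (Finset.notMem_erase i (Finset.range n)) (hne n i hn hi)
  have hmean := fun n i hn hi => hcard n i hi ▸ integral_norm_sq_inv_card_smul_sum_kernel_comp_sub
    hW hiid hlaw hψ (Finset.notMem_erase i (Finset.range n)) (hne n i hn hi)
  refine tendstoInMeasure_zero_of_integral_tendsto_zero
    (fun n ω => sampleMean_nonneg fun i => sq_nonneg _) ?_ ?_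
  · filter_upwards [eventually_ge_atTop 2] with n hn
    exact (integrable_finsetSum _ fun i hi => hint n i hn hi).const_mul _
  · have hlim : Tendsto (fun n : ℕ => (∫ q, ‖ψ q.1 q.2 - ∫ v, ψ q.1 v ∂F₀‖ ^ 2 ∂(F₀.prod F₀))
        / ((n : ℝ) - 1)) atTop (𝓝 0) :=
      tendsto_const_nhds.div_atTop (tendsto_atTop_add_const_right _ _ tendsto_natCast_atTop_atTop)
    refine (tendsto_congr' ((eventually_ge_atTop 2).mono fun n hn => ?_)).mpr hlim
    have hn1 : (1 : ℝ) < n := by exact_mod_cast hn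
    unfold sampleMean
    rw [integral_const_mul, integral_finsetSum _ fun i hi => hint n i hn hi,
      Finset.sum_congr rfl fun i hi => hmean n i hn hi, Finset.sum_const, Finset.card_range,
      nsmul_eq_mul]
    field_simp

end SampleMeans

theorem ustat_variance_estimator_consistency_general
    {Ω 𝒲 : Type*} [MeasurableSpace Ω] [MeasurableSpace 𝒲] {k : ℕ}
    (P : Measure Ω) [IsProbabilityMeasure P]
    (F₀ : Measure 𝒲) [IsProbabilityMeasure F₀]
    (W : ℕ → Ω → 𝒲)
    (hWmeas : ∀ i, Measurable (W i))
    (hiid : iIndepFun W P)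
    (hlaw : ∀ i, P.map (W i) = F₀)
    (g φ : 𝒲 → 𝒲 → EuclideanSpace ℝ (Fin k))
    (hgmeas : Measurable (Function.uncurry g))
    (hφmeas : Measurable (Function.uncurry φ))
    (hmean : (∫ q : 𝒲 × 𝒲, (g q.1 q.2 + φ q.1 q.2) ∂(F₀.prod F₀)) = 0)
    (hL2 : MemLp (fun q : 𝒲 × 𝒲 => g q.1 q.2 + φ q.1 q.2) 2 (F₀.prod F₀))
    (ghat φhat : ℕ → ℕ → ℕ → Ω → EuclideanSpace ℝ (Fin k))
    (hgLOO : TendstoInMeasure P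
      (fun (n : ℕ) ω => (n:ℝ)⁻¹ * ∑ i ∈ Finset.range n,
        ‖(((n:ℝ) - 1)⁻¹ • ∑ j ∈ (Finset.range n).erase i, ghat n i j ω)
          - (((n:ℝ) - 1)⁻¹ • ∑ j ∈ (Finset.range n).erase i, g (W i ω) (W j ω))‖ ^ 2)
      atTop (fun _ => (0:ℝ)))
    (hφLOO : TendstoInMeasure P
      (fun (n : ℕ) ω => (n:ℝ)⁻¹ * ∑ i ∈ Finset.range n,
        ‖(((n:ℝ) - 1)⁻¹ • ∑ j ∈ (Finset.range n).erase i, φhat n i j ω)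
          - (((n:ℝ) - 1)⁻¹ • ∑ j ∈ (Finset.range n).erase i, φ (W i ω) (W j ω))‖ ^ 2)
      atTop (fun _ => (0:ℝ))) :
    ∀ a b : Fin k,
      TendstoInMeasure P
        (fun (n : ℕ) ω =>
          (4 / ((n:ℝ) * ((n:ℝ) - 1) ^ 2)) *
            ∑ i ∈ Finset.range n,
              ((∑ j ∈ (Finset.range n).erase i, (ghat n i j ω + φhat n i j ω)) a)
              * ((∑ j ∈ (Finset.range n).erase i, (ghat n i j ω + φhat n i j ω)) b))
        atTop
        (fun _ =>
          4 * ∫ w,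
            (((∫ w', (g w w' + φ w w') ∂F₀)
                - ∫ v, (∫ w', (g v w' + φ v w') ∂F₀) ∂F₀) a)
            * (((∫ w', (g w w' + φ w w') ∂F₀)
                - ∫ v, (∫ w', (g v w' + φ v w') ∂F₀) ∂F₀) b) ∂F₀) := by
  intro a b
  have hψ : MemLp (Function.uncurry fun w w' => g w w' + φ w w') 2 (F₀.prod F₀) := hL2
  have hh := hψ.integral_prod_left
  have hhm : Measurable fun w => ∫ w', (g w w' + φ w w') ∂F₀ :=
    (hgmeas.add hφmeas).stronglyMeasurable.integral_prod_right'.measurable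
  have hcentred : ∫ v, (∫ w', (g v w' + φ v w') ∂F₀) ∂F₀ = 0 :=
    (integral_prod _ (hψ.integrable one_le_two)).symm.trans hmean
  simp only [hcentred, sub_zero]
  have hS := (tendstoInMeasure_sampleMean_comp_of_iIndepFun hWmeas hiid hlaw
    (f := fun w => (∫ w', (g w w' + φ w w') ∂F₀) a * (∫ w', (g w w' + φ w w') ∂F₀) b)
    (by fun_prop) (hh.integrable_apply_mul_apply a b)).comp_continuousAt
    (φ := fun t => 4 * t) (by fun_prop)
  have hH := tendstoInMeasure_sampleMean_comp_of_iIndepFun hWmeas hiid hlaw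
    (hhm.norm.pow_const 2) ((memLp_two_iff_integrable_sq_norm hh.1).mp hh)
  have hR := tendstoInMeasure_leaveOneOut_sub_integral hWmeas hiid hlaw hψ
  simp only [Finset.sum_add_distrib] at hR
  have hD := tendstoInMeasure_sampleMean_norm_sq_smul_add_sub hgLOO hφLOO hR
  simp only [← Finset.sum_add_distrib] at hD
  refine tendstoInMeasure_of_abs_sub_le_sqrt_mul_add 8 hS hH hD ?_
  filter_upwards [eventually_ge_atTop 2] with n hn ω
  exact abs_varianceEstimator_sub_le hn a b _ _

theorem ustat_variance_estimator_consistency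
    {Ω 𝒲 : Type*} [MeasurableSpace Ω] [MeasurableSpace 𝒲] {k : ℕ}
    (P : Measure Ω) [IsProbabilityMeasure P]
    (F₀ : Measure 𝒲) [IsProbabilityMeasure F₀]
    (W : ℕ → Ω → 𝒲)
    (hWmeas : ∀ i, Measurable (W i))
    (hiid : iIndepFun W P)
    (hlaw : ∀ i, P.map (W i) = F₀)
    (g φ : 𝒲 → 𝒲 → EuclideanSpace ℝ (Fin k))
    (hgmeas : Measurable (Function.uncurry g))
    (hφmeas : Measurable (Function.uncurry φ))
    (hgsym : ∀ w w', g w w' = g w' w)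
    (hφsym : ∀ w w', φ w w' = φ w' w)
    (hmean : (∫ q : 𝒲 × 𝒲, (g q.1 q.2 + φ q.1 q.2) ∂(F₀.prod F₀)) = 0)
    (hL2 : MemLp (fun q : 𝒲 × 𝒲 => g q.1 q.2 + φ q.1 q.2) 2 (F₀.prod F₀))
    (ghat φhat : ℕ → ℕ → ℕ → Ω → EuclideanSpace ℝ (Fin k))
    (hgLOO : TendstoInMeasure P
      (fun (n : ℕ) ω => (n:ℝ)⁻¹ * ∑ i ∈ Finset.range n,
        ‖(((n:ℝ) - 1)⁻¹ • ∑ j ∈ (Finset.range n).erase i, ghat n i j ω)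
          - (((n:ℝ) - 1)⁻¹ • ∑ j ∈ (Finset.range n).erase i, g (W i ω) (W j ω))‖ ^ 2)
      atTop (fun _ => (0:ℝ)))
    (hφLOO : TendstoInMeasure P
      (fun (n : ℕ) ω => (n:ℝ)⁻¹ * ∑ i ∈ Finset.range n,
        ‖(((n:ℝ) - 1)⁻¹ • ∑ j ∈ (Finset.range n).erase i, φhat n i j ω)
          - (((n:ℝ) - 1)⁻¹ • ∑ j ∈ (Finset.range n).erase i, φ (W i ω) (W j ω))‖ ^ 2)
      atTop (fun _ => (0:ℝ))) :
    ∀ a b : Fin k,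
      TendstoInMeasure P
        (fun (n : ℕ) ω =>
          (4 / ((n:ℝ) * ((n:ℝ) - 1) ^ 2)) *
            ∑ i ∈ Finset.range n,
              ((∑ j ∈ (Finset.range n).erase i, (ghat n i j ω + φhat n i j ω)) a)
              * ((∑ j ∈ (Finset.range n).erase i, (ghat n i j ω + φhat n i j ω)) b))
        atTop
        (fun _ =>
          4 * ∫ w,
            (((∫ w', (g w w' + φ w w') ∂F₀)
                - ∫ v, (∫ w', (g v w' + φ v w') ∂F₀) ∂F₀) a)
            * (((∫ w', (g w w' + φ w w') ∂F₀)
                - ∫ v, (∫ w', (g v w' + φ v w') ∂F₀) ∂F₀) b) ∂F₀) :=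
  ustat_variance_estimator_consistency_general P F₀ W hWmeas hiid hlaw g φ hgmeas hφmeas hmean hL2
    ghat φhat hgLOO hφLOO
end

section
/- Let F₀ be a probability measure on a measurable space 𝒲 and let φ, φ' : 𝒲×𝒲 → ℝ be measurable symmetric kernels such that φ(w,·) and φ'(w,·) are F₀-integrable for every w ∈ 𝒲. If ∫∫ φ dK_H = ∫∫ φ' dK_H for every probability measure H on 𝒲 (for which both integrals are defined), then ∫ φ(w,w') F₀(dw') = ∫ φ'(w,w') F₀(dw') for every w ∈ 𝒲; that is, φ − φ' is a degenerate kernel (its first projection against F₀ vanishes identically), so two U-statistic first-step influence functions for the same problem can differ only by a degenerate kernel. -/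
/-!
STATEMENT 12: If two symmetric kernels φ, φ' (with F₀-integrable sections) satisfy
∫∫ φ dK_H = ∫∫ φ' dK_H for every probability measure H for which both integrals are
defined (K_H = F₀⊗H + H⊗F₀), then their first projections against F₀ agree everywhere:
∫ φ(w,·) dF₀ = ∫ φ'(w,·) dF₀ for every w; i.e. φ − φ' is a degenerate kernel.
-/

open MeasureTheory

theorem uFSIF_unique_up_to_degenerate_kernel
    {𝒲 : Type*} [MeasurableSpace 𝒲]
    (F₀ : Measure 𝒲) [IsProbabilityMeasure F₀]
    (φ φ' : 𝒲 → 𝒲 → ℝ)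
    (hφmeas : Measurable (Function.uncurry φ))
    (hφ'meas : Measurable (Function.uncurry φ'))
    (hφsym : ∀ w w', φ w w' = φ w' w)
    (hφ'sym : ∀ w w', φ' w w' = φ' w' w)
    (hφsec : ∀ w, Integrable (φ w) F₀)
    (hφ'sec : ∀ w, Integrable (φ' w) F₀)
    (heq : ∀ H : Measure 𝒲, IsProbabilityMeasure H →
      Integrable (Function.uncurry φ) (F₀.prod H + H.prod F₀) →
      Integrable (Function.uncurry φ') (F₀.prod H + H.prod F₀) →
      (∫ p : 𝒲 × 𝒲, φ p.1 p.2 ∂(F₀.prod H + H.prod F₀))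
        = ∫ p : 𝒲 × 𝒲, φ' p.1 p.2 ∂(F₀.prod H + H.prod F₀)) :
    ∀ w, (∫ w', φ w w' ∂F₀) = ∫ w', φ' w w' ∂F₀ := by
  intro w
  have hp1 : F₀.prod (Measure.dirac w) = F₀.map (fun x => (x, w)) :=
    Measure.prod_dirac w
  have hp2 : (Measure.dirac w).prod F₀ = F₀.map (Prod.mk w) :=
    Measure.dirac_prod w
  have key : ∀ (ψ : 𝒲 → 𝒲 → ℝ), Measurable (Function.uncurry ψ) →
      (∀ a b, ψ a b = ψ b a) → (∀ a, Integrable (ψ a) F₀) →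
      Integrable (Function.uncurry ψ)
        (F₀.prod (Measure.dirac w) + (Measure.dirac w).prod F₀) ∧
      (∫ p : 𝒲 × 𝒲, ψ p.1 p.2
          ∂(F₀.prod (Measure.dirac w) + (Measure.dirac w).prod F₀))
        = 2 * ∫ w', ψ w w' ∂F₀ := by
    intro ψ hm hs hint
    have h1 : Integrable (Function.uncurry ψ) (F₀.prod (Measure.dirac w)) := by
      rw [hp1, integrable_map_measure hm.aestronglyMeasurable
        measurable_prodMk_right.aemeasurable]
      have : (Function.uncurry ψ ∘ fun x => (x, w)) = fun x => ψ x w := rfl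
      rw [this]
      have : (fun x => ψ x w) = ψ w := by funext x; exact hs x w
      rw [this]; exact hint w
    have h2 : Integrable (Function.uncurry ψ) ((Measure.dirac w).prod F₀) := by
      rw [hp2, integrable_map_measure hm.aestronglyMeasurable
        measurable_prodMk_left.aemeasurable]
      exact hint w
    refine ⟨h1.add_measure h2, ?_⟩
    rw [show (∫ p : 𝒲 × 𝒲, ψ p.1 p.2
          ∂(F₀.prod (Measure.dirac w) + (Measure.dirac w).prod F₀))
        = ∫ p : 𝒲 × 𝒲, Function.uncurry ψ p
          ∂(F₀.prod (Measure.dirac w) + (Measure.dirac w).prod F₀) from rfl,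
      integral_add_measure h1 h2, hp1, hp2,
      integral_map measurable_prodMk_right.aemeasurable
        hm.aestronglyMeasurable,
      integral_map measurable_prodMk_left.aemeasurable hm.aestronglyMeasurable]
    simp only [Function.uncurry_apply_pair]
    have : (∫ x, ψ x w ∂F₀) = ∫ x, ψ w x ∂F₀ := by
      congr 1; funext x; exact hs x w
    rw [this]; ring
  obtain ⟨hI, hV⟩ := key φ hφmeas hφsym hφsec
  obtain ⟨hI', hV'⟩ := key φ' hφ'meas hφ'sym hφ'sec
  have := heq (Measure.dirac w) (by infer_instance) hI hI'
  rw [hV, hV'] at this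
  linarith
end

section
/- Let W = (Y,X) have law F on 𝒴×𝒳 with Y real and square-integrable, let μ be the law of X, let Γ be a closed linear subspace of L²(μ), and let γ ∈ Γ satisfy the orthogonality condition E_F[ν(X)(Y − γ(X))] = 0 for all ν ∈ Γ. Let α : 𝒳×𝒳 → ℝ be measurable with α(·,x) ∈ Γ and α(x,·) ∈ Γ for every x ∈ 𝒳, and such that α(X_i,X_j)(Y_i − γ(X_i)) and α(X_i,X_j)(Y_j − γ(X_j)) are integrable under F⊗F. Then for any constants c₁, c₂, E_{F⊗F}[ α(X_i,X_j) ( c₁(Y_i − γ(X_i)) + c₂(Y_j − γ(X_j)) ) ] = 0, where (W_i,W_j) are independent copies of W. -/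
/-!
Split the integrand into its `c₁`- and `c₂`-parts. By Fubini, integrating the `c₁`-part over
`W_i` first leaves, for each fixed `x_j`, the orthogonality condition tested against the section
`α(·, x_j) ∈ Γ`, which vanishes; symmetrically for the `c₂`-part, integrating over `W_j` first
and testing against `α(x_i, ·) ∈ Γ`.
-/

open MeasureTheory

section Fubini

variable {α β E : Type*} [MeasurableSpace α] [MeasurableSpace β]
  [NormedAddCommGroup E] [NormedSpace ℝ E] {μ : Measure α} {ν : Measure β} [SFinite μ] [SFinite ν]
  {f : α × β → E}

theorem integral_prod_eq_zero_of_forall_integral_left_eq_zero (hf : Integrable f (μ.prod ν))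
    (h : ∀ y, ∫ x, f (x, y) ∂μ = 0) : ∫ z, f z ∂(μ.prod ν) = 0 := by
  simp [integral_prod_symm f hf, h]

theorem integral_prod_eq_zero_of_forall_integral_right_eq_zero (hf : Integrable f (μ.prod ν))
    (h : ∀ x, ∫ y, f (x, y) ∂ν = 0) : ∫ z, f z ∂(μ.prod ν) = 0 := by
  simp [integral_prod f hf, h]

end Fubini

theorem global_robustness_of_UFSIF_general
    {𝒳 : Type*} [MeasurableSpace 𝒳]
    (F : Measure (ℝ × 𝒳)) [IsProbabilityMeasure F]
    (Γ : Set (𝒳 → ℝ))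
    (γ : 𝒳 → ℝ)
    (horth : ∀ ν ∈ Γ, (∫ w : ℝ × 𝒳, ν w.2 * (w.1 - γ w.2) ∂F) = 0)
    (α : 𝒳 → 𝒳 → ℝ)
    (hα_sec₁ : ∀ x, (fun x' => α x' x) ∈ Γ)
    (hα_sec₂ : ∀ x, (fun x' => α x x') ∈ Γ)
    (hint₁ : Integrable
      (fun p : (ℝ × 𝒳) × (ℝ × 𝒳) => α p.1.2 p.2.2 * (p.1.1 - γ p.1.2)) (F.prod F))
    (hint₂ : Integrable
      (fun p : (ℝ × 𝒳) × (ℝ × 𝒳) => α p.1.2 p.2.2 * (p.2.1 - γ p.2.2)) (F.prod F))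
    (c₁ c₂ : ℝ) :
    (∫ p : (ℝ × 𝒳) × (ℝ × 𝒳),
        α p.1.2 p.2.2 * (c₁ * (p.1.1 - γ p.1.2) + c₂ * (p.2.1 - γ p.2.2))
        ∂(F.prod F)) = 0 := by
  have h₁ := integral_prod_eq_zero_of_forall_integral_left_eq_zero hint₁
    fun y => horth _ (hα_sec₁ y.2)
  have h₂ := integral_prod_eq_zero_of_forall_integral_right_eq_zero hint₂
    fun x => horth _ (hα_sec₂ x.2)
  calc (∫ p : (ℝ × 𝒳) × (ℝ × 𝒳),
        α p.1.2 p.2.2 * (c₁ * (p.1.1 - γ p.1.2) + c₂ * (p.2.1 - γ p.2.2)) ∂(F.prod F))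
      = c₁ * (∫ p, α p.1.2 p.2.2 * (p.1.1 - γ p.1.2) ∂(F.prod F))
          + c₂ * ∫ p, α p.1.2 p.2.2 * (p.2.1 - γ p.2.2) ∂(F.prod F) := by
        rw [← integral_const_mul, ← integral_const_mul,
          ← integral_add (hint₁.const_mul c₁) (hint₂.const_mul c₂)]
        congr 1 with p
        ring
    _ = 0 := by rw [h₁, h₂]; ring

theorem global_robustness_of_UFSIF
    {𝒳 : Type*} [MeasurableSpace 𝒳]
    (F : Measure (ℝ × 𝒳)) [IsProbabilityMeasure F]
    (Γ : Set (𝒳 → ℝ))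
    (hΓ_zero : (fun _ => (0:ℝ)) ∈ Γ)
    (hΓ_add : ∀ f ∈ Γ, ∀ g ∈ Γ, (fun x => f x + g x) ∈ Γ)
    (hΓ_smul : ∀ (c : ℝ), ∀ f ∈ Γ, (fun x => c * f x) ∈ Γ)
    (hΓ_L2 : ∀ f ∈ Γ, MemLp (fun w : ℝ × 𝒳 => f w.2) 2 F)
    (hY_L2 : MemLp (fun w : ℝ × 𝒳 => w.1) 2 F)
    (γ : 𝒳 → ℝ) (hγΓ : γ ∈ Γ)
    (horth : ∀ ν ∈ Γ, (∫ w : ℝ × 𝒳, ν w.2 * (w.1 - γ w.2) ∂F) = 0)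
    (α : 𝒳 → 𝒳 → ℝ)
    (hα_sec₁ : ∀ x, (fun x' => α x' x) ∈ Γ)
    (hα_sec₂ : ∀ x, (fun x' => α x x') ∈ Γ)
    (hint₁ : Integrable
      (fun p : (ℝ × 𝒳) × (ℝ × 𝒳) => α p.1.2 p.2.2 * (p.1.1 - γ p.1.2)) (F.prod F))
    (hint₂ : Integrable
      (fun p : (ℝ × 𝒳) × (ℝ × 𝒳) => α p.1.2 p.2.2 * (p.2.1 - γ p.2.2)) (F.prod F))
    (c₁ c₂ : ℝ) :
    (∫ p : (ℝ × 𝒳) × (ℝ × 𝒳),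
        α p.1.2 p.2.2 * (c₁ * (p.1.1 - γ p.1.2) + c₂ * (p.2.1 - γ p.2.2))
        ∂(F.prod F)) = 0 :=
  global_robustness_of_UFSIF_general F Γ γ horth α hα_sec₁ hα_sec₂ hint₁ hint₂ c₁ c₂
end

section
/- Let W = (Y,X) have law F₀ with Y real, let μ be the law of X, let Γ be a closed linear subspace of L²(μ) containing constants, and let γ₀ ∈ Γ satisfy E[ν(X)(Y − γ₀(X))] = 0 for all ν ∈ Γ. Write ε = Y − γ₀(X), μ̄ = E[Y] (= E[γ₀(X)]), θ₀ = Var(γ₀(X)), and assume γ₀(X) ∈ L⁴, E[(γ₀(X)−μ̄)²ε²] < ∞ and E[|γ₀(X)−μ̄|³|ε|] < ∞. Let (W_i,W_j) be independent copies of W and define ψ(w_i,w_j) = (1/2)(γ₀(x_i) − γ₀(x_j))² − θ₀ + (γ₀(x_i) − γ₀(x_j))( (y_i − γ₀(x_i)) − (y_j − γ₀(x_j)) ). Then Σ := 4·Var( E[ψ(W_i,W_j) | W_i] ) = Var[ (γ₀(X)−μ̄)² ] + 4 E[ (γ₀(X)−μ̄)² ε² ] + 4 E[ (γ₀(X)−μ̄)³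 ε ]; and if in addition E[ε | X] = 0 almost surely, then Σ = Var[ (γ₀(X)−μ̄)² ] + 4 E[ (γ₀(X)−μ̄)² ε² ]. -/
/-!
Integrating `ψ(w, ·)` against `F₀` and using that the residual `ε` is orthogonal both to
constants and to `γ₀` leaves the Hájek projection `½((γ₀(x) − μ̄)² − θ₀) + (γ₀(x) − μ̄) ε`,
which has mean zero. When it is squared, the cross term is `(γ₀(X) − μ̄)³ ε − θ₀ (γ₀(X) − μ̄) ε`,
whose second part again integrates to zero by orthogonality. If `E[ε | X] = 0`, the cubic
term vanishes as well, since `(γ₀(X) − μ̄)³` pulls out of the conditional expectation.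
-/

open MeasureTheory

lemma memLp_two_sq_of_memLp_four {α : Type*} [MeasurableSpace α] {μ : Measure α} {f : α → ℝ}
    (hf : MemLp f 4 μ) : MemLp (fun a => f a ^ 2) 2 μ := by
  have : ENNReal.HolderTriple 4 4 2 := ⟨by
    rw [← ENNReal.toReal_eq_toReal_iff' (by simp) (by simp)]
    norm_num [ENNReal.toReal_add]⟩
  simpa [sq] using hf.mul' hf

section

variable {Ω : Type*} [MeasurableSpace Ω] {P : Measure Ω} {g c e : Ω → ℝ} {m θ : ℝ}

lemma integral_sub_const_mul_eq_zero (he : Integrable e P)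
    (hge : Integrable (fun ω => g ω * e ω) P) (he0 : ∫ ω, e ω ∂P = 0)
    (hge0 : ∫ ω, g ω * e ω ∂P = 0) (a : ℝ) :
    ∫ ω, (g ω - a) * e ω ∂P = 0 := by
  simp only [sub_mul _ a]
  rw [integral_sub hge (by fun_prop), integral_const_mul, hge0, he0, mul_zero, sub_zero]

variable [IsProbabilityMeasure P]

lemma integral_debiasedMoment_snd (hg : MemLp g 2 P) (he : Integrable e P)
    (hge : Integrable (fun ω => g ω * e ω) P) (he0 : ∫ ω, e ω ∂P = 0)
    (hge0 : ∫ ω, g ω * e ω ∂P = 0) (hm : ∫ ω, g ω ∂P = m)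
    (hθ : θ = ∫ ω, (g ω - m) ^ 2 ∂P) (a b : ℝ) :
    ∫ ω, ((1/2) * (a - g ω) ^ 2 - θ + (a - g ω) * (b - e ω)) ∂P
      = (1/2) * ((a - m) ^ 2 - θ) + (a - m) * b := by
  have hg1 : Integrable g P := hg.integrable one_le_two
  have hc2 : Integrable (fun ω => (g ω - m) ^ 2) P := (hg.sub (memLp_const m)).integrable_sq
  have hc0 : ∫ ω, (g ω - m) ∂P = 0 := by
    rw [integral_sub hg1 (integrable_const m), hm]
    simp
  -- centred at `m`, every non-constant term except `½ (g - m)²` has mean zero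
  calc _ = ∫ ω, ((1/2) * (a - m) ^ 2 - θ + (a - m) * b + (-(a - m) - b) * (g ω - m)
        + (1/2) * (g ω - m) ^ 2 + (-a) * e ω + g ω * e ω) ∂P := by
          congr 1; funext ω; ring
    _ = _ := by
      rw [integral_add (by fun_prop) hge, integral_add (by fun_prop) (by fun_prop),
        integral_add (by fun_prop) (by fun_prop), integral_add (by fun_prop) (by fun_prop)]
      simp only [integral_const_mul, integral_const, probReal_univ, smul_eq_mul, one_mul, hc0,
        he0, hge0, ← hθ]
      ring

lemma integral_hajekProjection_eq_zero (hc : MemLp c 2 P)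
    (hce : Integrable (fun ω => c ω * e ω) P)
    (hce0 : ∫ ω, c ω * e ω ∂P = 0) (hθ : θ = ∫ ω, c ω ^ 2 ∂P) :
    ∫ ω, ((1/2) * (c ω ^ 2 - θ) + c ω * e ω) ∂P = 0 := by
  have hc2 := hc.integrable_sq
  rw [integral_add (by fun_prop) hce, integral_const_mul, integral_sub hc2 (integrable_const θ)]
  simp [← hθ, hce0]

lemma integral_hajekProjection_sq (hc : MemLp c 4 P) (hce : Integrable (fun ω => c ω * e ω) P)
    (hc2e2 : Integrable (fun ω => c ω ^ 2 * e ω ^ 2) P)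
    (hc3e : Integrable (fun ω => c ω ^ 3 * e ω) P) (hce0 : ∫ ω, c ω * e ω ∂P = 0) :
    ∫ ω, ((1/2) * (c ω ^ 2 - θ) + c ω * e ω) ^ 2 ∂P
      = (1/4) * ∫ ω, (c ω ^ 2 - θ) ^ 2 ∂P + ∫ ω, c ω ^ 2 * e ω ^ 2 ∂P
        + ∫ ω, c ω ^ 3 * e ω ∂P := by
  have hq := ((memLp_two_sq_of_memLp_four hc).sub (memLp_const θ)).integrable_sq
  calc _ = ∫ ω, ((1/4) * (c ω ^ 2 - θ) ^ 2 + c ω ^ 2 * e ω ^ 2 + c ω ^ 3 * e ω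
        + (-θ) * (c ω * e ω)) ∂P := by
          congr 1; funext ω; ring
    _ = _ := by
      rw [integral_add (by fun_prop) (by fun_prop), integral_add (by fun_prop) hc3e,
        integral_add (by fun_prop) hc2e2]
      simp only [integral_const_mul, hce0]
      ring

end

lemma integral_mul_eq_zero_of_condExp_eq_zero {Ω : Type*} {m m₀ : MeasurableSpace Ω}
    {P : Measure Ω} (hm : m ≤ m₀) [SigmaFinite (P.trim hm)] {f e : Ω → ℝ}
    (hf : StronglyMeasurable[m] f) (hfe : Integrable (f * e) P) (he : Integrable e P)
    (he0 : P[e | m] =ᵐ[P] 0) :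
    ∫ ω, f ω * e ω ∂P = 0 := by
  have hpull : P[f * e | m] =ᵐ[P] 0 := by
    filter_upwards [condExp_mul_of_stronglyMeasurable_left hf hfe he, he0] with ω hω hω0
    simp [hω, hω0]
  change ∫ ω, (f * e) ω ∂P = 0
  rw [← integral_condExp hm, integral_congr_ae hpull]
  simp

theorem asymptotic_variance_debiased_variance_of_fitted_values_general
    {𝒳 : Type*} [MeasurableSpace 𝒳]
    (F₀ : Measure (ℝ × 𝒳)) [IsProbabilityMeasure F₀]
    (Γ : Set (𝒳 → ℝ))
    (hΓ_const : ∀ c : ℝ, (fun _ => c) ∈ Γ)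
    (γ₀ : 𝒳 → ℝ) (hγ₀meas : Measurable γ₀) (hγ₀Γ : γ₀ ∈ Γ)
    (horth : ∀ ν ∈ Γ, (∫ w : ℝ × 𝒳, ν w.2 * (w.1 - γ₀ w.2) ∂F₀) = 0)
    (hY_L2 : MemLp (fun w : ℝ × 𝒳 => w.1) 2 F₀)
    (hγ₀_L4 : MemLp (fun w : ℝ × 𝒳 => γ₀ w.2) 4 F₀)
    (μbar θ₀ : ℝ)
    (hμbar : μbar = ∫ w : ℝ × 𝒳, w.1 ∂F₀)
    (hθ₀ : θ₀ = ∫ w : ℝ × 𝒳, (γ₀ w.2 - ∫ v : ℝ × 𝒳, γ₀ v.2 ∂F₀) ^ 2 ∂F₀)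
    (hmom₁ : Integrable
      (fun w : ℝ × 𝒳 => (γ₀ w.2 - μbar) ^ 2 * (w.1 - γ₀ w.2) ^ 2) F₀)
    (hmom₂ : Integrable
      (fun w : ℝ × 𝒳 => |γ₀ w.2 - μbar| ^ 3 * |w.1 - γ₀ w.2|) F₀)
    (ψ : (ℝ × 𝒳) → (ℝ × 𝒳) → ℝ)
    (hψ : ∀ w w' : ℝ × 𝒳,
      ψ w w' = (1/2) * (γ₀ w.2 - γ₀ w'.2) ^ 2 - θ₀
        + (γ₀ w.2 - γ₀ w'.2) * ((w.1 - γ₀ w.2) - (w'.1 - γ₀ w'.2)))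
    (Sig : ℝ)
    (hSig : Sig = 4 * ∫ w : ℝ × 𝒳,
      ((∫ w', ψ w w' ∂F₀) - ∫ v : ℝ × 𝒳, (∫ w', ψ v w' ∂F₀) ∂F₀) ^ 2 ∂F₀) :
    Sig = (∫ w : ℝ × 𝒳,
          ((γ₀ w.2 - μbar) ^ 2 - ∫ v : ℝ × 𝒳, (γ₀ v.2 - μbar) ^ 2 ∂F₀) ^ 2 ∂F₀)
        + 4 * (∫ w : ℝ × 𝒳, (γ₀ w.2 - μbar) ^ 2 * (w.1 - γ₀ w.2) ^ 2 ∂F₀)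
        + 4 * (∫ w : ℝ × 𝒳, (γ₀ w.2 - μbar) ^ 3 * (w.1 - γ₀ w.2) ∂F₀)
    ∧ ((F₀[(fun w : ℝ × 𝒳 => w.1 - γ₀ w.2) |
          MeasurableSpace.comap Prod.snd inferInstance] =ᵐ[F₀] 0) →
        Sig = (∫ w : ℝ × 𝒳,
              ((γ₀ w.2 - μbar) ^ 2 - ∫ v : ℝ × 𝒳, (γ₀ v.2 - μbar) ^ 2 ∂F₀) ^ 2 ∂F₀)
            + 4 * (∫ w : ℝ × 𝒳, (γ₀ w.2 - μbar) ^ 2 * (w.1 - γ₀ w.2) ^ 2 ∂F₀)) := by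
  have hG : MemLp (fun w : ℝ × 𝒳 => γ₀ w.2) 2 F₀ := hγ₀_L4.mono_exponent (by norm_num)
  have hc : MemLp (fun w : ℝ × 𝒳 => γ₀ w.2 - μbar) 4 F₀ := hγ₀_L4.sub (memLp_const μbar)
  have hε : MemLp (fun w : ℝ × 𝒳 => w.1 - γ₀ w.2) 2 F₀ := hY_L2.sub hG
  have hε₁ : Integrable (fun w : ℝ × 𝒳 => w.1 - γ₀ w.2) F₀ := hε.integrable one_le_two
  have hGε : Integrable (fun w : ℝ × 𝒳 => γ₀ w.2 * (w.1 - γ₀ w.2)) F₀ := hG.integrable_mul hε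
  have hc₂ : MemLp (fun w : ℝ × 𝒳 => γ₀ w.2 - μbar) 2 F₀ := hc.mono_exponent (by norm_num)
  have hcε : Integrable (fun w : ℝ × 𝒳 => (γ₀ w.2 - μbar) * (w.1 - γ₀ w.2)) F₀ :=
    hc₂.integrable_mul hε
  have hc3ε : Integrable (fun w : ℝ × 𝒳 => (γ₀ w.2 - μbar) ^ 3 * (w.1 - γ₀ w.2)) F₀ :=
    hmom₂.mono' (by fun_prop) (.of_forall fun w => by simp)
  have hε0 : ∫ w : ℝ × 𝒳, (w.1 - γ₀ w.2) ∂F₀ = 0 := by simpa using horth _ (hΓ_const 1)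
  have hGε0 : ∫ w : ℝ × 𝒳, γ₀ w.2 * (w.1 - γ₀ w.2) ∂F₀ = 0 := horth γ₀ hγ₀Γ
  have hGmean : ∫ w : ℝ × 𝒳, γ₀ w.2 ∂F₀ = μbar := by
    rw [integral_sub (hY_L2.integrable one_le_two) (hG.integrable one_le_two), ← hμbar] at hε0
    linarith
  rw [hGmean] at hθ₀
  have hcε0 := integral_sub_const_mul_eq_zero hε₁ hGε hε0 hGε0 μbar
  have hinner : ∀ w : ℝ × 𝒳, ∫ w', ψ w w' ∂F₀
      = (1/2) * ((γ₀ w.2 - μbar) ^ 2 - θ₀) + (γ₀ w.2 - μbar) * (w.1 - γ₀ w.2) := fun w => by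
    simp only [hψ]
    exact integral_debiasedMoment_snd hG hε₁ hGε hε0 hGε0 hGmean hθ₀ _ _
  have hcube_meas : StronglyMeasurable[MeasurableSpace.comap Prod.snd inferInstance]
      (fun w : ℝ × 𝒳 => (γ₀ w.2 - μbar) ^ 3) :=
    (((hγ₀meas.comp (comap_measurable Prod.snd)).sub_const μbar).pow_const 3).stronglyMeasurable
  have hSig' : Sig = ∫ w : ℝ × 𝒳, ((γ₀ w.2 - μbar) ^ 2 - θ₀) ^ 2 ∂F₀
      + 4 * ∫ w : ℝ × 𝒳, (γ₀ w.2 - μbar) ^ 2 * (w.1 - γ₀ w.2) ^ 2 ∂F₀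
      + 4 * ∫ w : ℝ × 𝒳, (γ₀ w.2 - μbar) ^ 3 * (w.1 - γ₀ w.2) ∂F₀ := by
    simp only [hSig, hinner, integral_hajekProjection_eq_zero hc₂ hcε hcε0 hθ₀, sub_zero]
    rw [integral_hajekProjection_sq hc hcε hmom₁ hc3ε hcε0]
    ring
  rw [← hθ₀]
  refine ⟨hSig', fun hε_cond => ?_⟩
  rw [hSig', integral_mul_eq_zero_of_condExp_eq_zero measurable_snd.comap_le hcube_meas hc3ε hε₁
    hε_cond, mul_zero, add_zero]

theorem asymptotic_variance_debiased_variance_of_fitted_values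
    {𝒳 : Type*} [MeasurableSpace 𝒳]
    (F₀ : Measure (ℝ × 𝒳)) [IsProbabilityMeasure F₀]
    (Γ : Set (𝒳 → ℝ))
    (hΓ_const : ∀ c : ℝ, (fun _ => c) ∈ Γ)
    (hΓ_add : ∀ f ∈ Γ, ∀ g ∈ Γ, (fun x => f x + g x) ∈ Γ)
    (hΓ_smul : ∀ (c : ℝ), ∀ f ∈ Γ, (fun x => c * f x) ∈ Γ)
    (γ₀ : 𝒳 → ℝ) (hγ₀meas : Measurable γ₀) (hγ₀Γ : γ₀ ∈ Γ)
    (horth : ∀ ν ∈ Γ, (∫ w : ℝ × 𝒳, ν w.2 * (w.1 - γ₀ w.2) ∂F₀) = 0)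
    (hY_L2 : MemLp (fun w : ℝ × 𝒳 => w.1) 2 F₀)
    (hγ₀_L4 : MemLp (fun w : ℝ × 𝒳 => γ₀ w.2) 4 F₀)
    (μbar θ₀ : ℝ)
    (hμbar : μbar = ∫ w : ℝ × 𝒳, w.1 ∂F₀)
    (hθ₀ : θ₀ = ∫ w : ℝ × 𝒳, (γ₀ w.2 - ∫ v : ℝ × 𝒳, γ₀ v.2 ∂F₀) ^ 2 ∂F₀)
    (hmom₁ : Integrable
      (fun w : ℝ × 𝒳 => (γ₀ w.2 - μbar) ^ 2 * (w.1 - γ₀ w.2) ^ 2) F₀)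
    (hmom₂ : Integrable
      (fun w : ℝ × 𝒳 => |γ₀ w.2 - μbar| ^ 3 * |w.1 - γ₀ w.2|) F₀)
    (ψ : (ℝ × 𝒳) → (ℝ × 𝒳) → ℝ)
    (hψ : ∀ w w' : ℝ × 𝒳,
      ψ w w' = (1/2) * (γ₀ w.2 - γ₀ w'.2) ^ 2 - θ₀
        + (γ₀ w.2 - γ₀ w'.2) * ((w.1 - γ₀ w.2) - (w'.1 - γ₀ w'.2)))
    (Sig : ℝ)
    (hSig : Sig = 4 * ∫ w : ℝ × 𝒳,
      ((∫ w', ψ w w' ∂F₀) - ∫ v : ℝ × 𝒳, (∫ w', ψ v w' ∂F₀) ∂F₀) ^ 2 ∂F₀) :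
    Sig = (∫ w : ℝ × 𝒳,
          ((γ₀ w.2 - μbar) ^ 2 - ∫ v : ℝ × 𝒳, (γ₀ v.2 - μbar) ^ 2 ∂F₀) ^ 2 ∂F₀)
        + 4 * (∫ w : ℝ × 𝒳, (γ₀ w.2 - μbar) ^ 2 * (w.1 - γ₀ w.2) ^ 2 ∂F₀)
        + 4 * (∫ w : ℝ × 𝒳, (γ₀ w.2 - μbar) ^ 3 * (w.1 - γ₀ w.2) ∂F₀)
    ∧ ((F₀[(fun w : ℝ × 𝒳 => w.1 - γ₀ w.2) |
          MeasurableSpace.comap Prod.snd inferInstance] =ᵐ[F₀] 0) →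
        Sig = (∫ w : ℝ × 𝒳,
              ((γ₀ w.2 - μbar) ^ 2 - ∫ v : ℝ × 𝒳, (γ₀ v.2 - μbar) ^ 2 ∂F₀) ^ 2 ∂F₀)
            + 4 * (∫ w : ℝ × 𝒳, (γ₀ w.2 - μbar) ^ 2 * (w.1 - γ₀ w.2) ^ 2 ∂F₀)) :=
  asymptotic_variance_debiased_variance_of_fitted_values_general F₀ Γ hΓ_const γ₀ hγ₀meas hγ₀Γ horth
    hY_L2 hγ₀_L4 μbar θ₀ hμbar hθ₀ hmom₁ hmom₂ ψ hψ Sig hSig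
end
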